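/- arXiv:math/9509222 — 5 statements merged into one kernel-verified Lean document; each statement's English description precedes it below -/
import Mathlib

section
/- Commutation of T with 1 - TT* (Lemma 4.2). Let 0 < q < 1. In the *-algebra X̃⊗Ỹ one has T*T - q² T T* = (1-q²)·(1⊗1); equivalently, with R = TT*, (1-R)T = q² T(1-R) and T*(1-R) = q² (1-R)T*. -/
open scoped TensorProduct

noncomputable section

/-- the defining relations of the `*`-algebra `X̃`. -/
def XRel (q : ℝ) {A : Type*} [Ring A] [Algebra ℂ A] [StarRing A] (x1 x2 : A) : Prop :=
  x1 * x2 = (q:ℂ) • (x2 * x1) ∧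
  star x1 * x2 = (q:ℂ) • (x2 * star x1) ∧
  star x2 * x2 = ((q:ℂ)^2) • (x2 * star x2) + ((1 - q^2 : ℝ) : ℂ) • (1 : A) ∧
  star x1 * x1 = ((q:ℂ)^2) • (x1 * star x1) + ((1 - q^2 : ℝ) : ℂ) • ((1 : A) - x2 * star x2)

/-- the defining relations of the `*`-algebra `Ỹ`. -/
def YRel (q : ℝ) {B : Type*} [Ring B] [Algebra ℂ B] [StarRing B] (y1 y2 : B) : Prop :=
  y1 * y2 = (q:ℂ) • (y2 * y1) ∧
  star y1 * y2 = (q:ℂ) • (y2 * star y1) ∧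
  star y1 * y1 = y1 * star y1 ∧
  y1 * star y1 + y2 * star y2 = 1 ∧
  ((q:ℂ)^2) • (star y1 * y1) + star y2 * y2 = 1

section QCommutation

variable {k R : Type*} [CommRing k] [Ring R] [Algebra k R]

theorem one_sub_mul_mul_eq_smul_mul_one_sub_mul {c : k} {S T : R}
    (h : S * T = c • (T * S) + (1 - c) • 1) :
    (1 - T * S) * T = c • (T * (1 - T * S)) := by
  rw [sub_mul, one_mul, mul_assoc, h, mul_add, mul_smul_comm, mul_smul_comm, mul_one, mul_sub,
    mul_one, smul_sub]
  module

theorem mul_one_sub_mul_eq_smul_one_sub_mul_mul {c : k} {S T : R}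
    (h : S * T = c • (T * S) + (1 - c) • 1) :
    S * (1 - T * S) = c • ((1 - T * S) * S) := by
  rw [mul_sub, mul_one, ← mul_assoc, h, add_mul, smul_mul_assoc, smul_mul_assoc, one_mul, sub_mul,
    one_mul, smul_sub]
  module

end QCommutation

theorem XRel.star_x2_mul_x1 {q : ℝ} {A : Type*} [Ring A] [Algebra ℂ A] [StarRing A]
    [StarModule ℂ A] {X1 X2 : A} (hX : XRel q X1 X2) :
    star X2 * X1 = (q:ℂ) • (X1 * star X2) := by
  simpa [star_mul, star_smul, Complex.conj_ofReal] using congrArg star hX.2.1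

theorem YRel.star_y2_mul_star_y1 {q : ℝ} {B : Type*} [Ring B] [Algebra ℂ B] [StarRing B]
    [StarModule ℂ B] {Y1 Y2 : B} (hY : YRel q Y1 Y2) :
    star Y2 * star Y1 = (q:ℂ) • (star Y1 * star Y2) := by
  simpa [star_mul, star_smul, Complex.conj_ofReal] using congrArg star hY.1

section TensorT

variable {A B : Type*} [Ring A] [Algebra ℂ A] [StarRing A] [Ring B] [Algebra ℂ B] [StarRing B]

def tensorT (q : ℝ) (X1 X2 : A) (Y1 Y2 : B) : A ⊗[ℂ] B :=
  (-(q:ℂ)) • (X1 ⊗ₜ[ℂ] star Y1) + X2 ⊗ₜ[ℂ] Y2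

def tensorTStar (q : ℝ) (X1 X2 : A) (Y1 Y2 : B) : A ⊗[ℂ] B :=
  (-(q:ℂ)) • (star X1 ⊗ₜ[ℂ] Y1) + star X2 ⊗ₜ[ℂ] star Y2

variable [StarModule ℂ A] [StarModule ℂ B]

/- The q-commutation relations turn each cross term of `T*T` into `q²` times a cross term of
`TT*`; what is left of the diagonal terms collapses to `(1-q²)·1` by the quadratic relations,
using that `Y₁` is normal. -/
theorem tensorTStar_mul_tensorT_sub {q : ℝ} {X1 X2 : A} {Y1 Y2 : B}
    (hX : XRel q X1 X2) (hY : YRel q Y1 Y2) :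
    tensorTStar q X1 X2 Y1 Y2 * tensorT q X1 X2 Y1 Y2
      - ((q:ℂ)^2) • (tensorT q X1 X2 Y1 Y2 * tensorTStar q X1 X2 Y1 Y2)
      = ((1 - q^2 : ℝ) : ℂ) • (1 : A ⊗[ℂ] B) := by
  have hx2s1 := hX.star_x2_mul_x1
  have hy2s1s := hY.star_y2_mul_star_y1
  obtain ⟨-, hx1s2, hx2s2, hx1s1⟩ := hX
  obtain ⟨hy12, -, hy1s1, hy11s, hys11⟩ := hY
  have hy22s : Y2 * star Y2 = 1 - Y1 * star Y1 := eq_sub_of_add_eq' hy11s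
  have hys22 : star Y2 * Y2 = 1 - ((q:ℂ)^2) • (star Y1 * Y1) := eq_sub_of_add_eq' hys11
  simp only [tensorT, tensorTStar, add_mul, mul_add, smul_mul_assoc, mul_smul_comm,
    Algebra.TensorProduct.tmul_mul_tmul]
  rw [hx1s2, hx2s1, hy12, hy2s1s, hx2s2, hx1s1, hy22s, hys22, ← hy1s1]
  simp only [TensorProduct.add_tmul, TensorProduct.sub_tmul, TensorProduct.tmul_sub,
    ← TensorProduct.smul_tmul', TensorProduct.tmul_smul, Algebra.TensorProduct.one_def]
  push_cast
  module

theorem tensorTStar_mul_tensorT {q : ℝ} {X1 X2 : A} {Y1 Y2 : B}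
    (hX : XRel q X1 X2) (hY : YRel q Y1 Y2) :
    tensorTStar q X1 X2 Y1 Y2 * tensorT q X1 X2 Y1 Y2
      = ((q:ℂ)^2) • (tensorT q X1 X2 Y1 Y2 * tensorTStar q X1 X2 Y1 Y2)
        + (1 - (q:ℂ)^2) • 1 := by
  rw [← sub_eq_iff_eq_add', tensorTStar_mul_tensorT_sub hX hY]
  push_cast
  ring_nf

end TensorT

/- `X̃` and `Ỹ` are universal among complex `*`-algebras with generators satisfying the relations,
so the identity in `X̃⊗Ỹ` amounts to its validity in every such pair of algebras. -/
theorem commutation_T_with_one_sub_R_general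
    (q : ℝ)
    {A B : Type*} [Ring A] [Algebra ℂ A] [StarRing A] [StarModule ℂ A]
    [Ring B] [Algebra ℂ B] [StarRing B] [StarModule ℂ B]
    (X1 X2 : A) (Y1 Y2 : B) (hX : XRel q X1 X2) (hY : YRel q Y1 Y2) :
    (((-(q:ℂ)) • (star X1 ⊗ₜ[ℂ] Y1) + star X2 ⊗ₜ[ℂ] star Y2) *
        ((-(q:ℂ)) • (X1 ⊗ₜ[ℂ] star Y1) + X2 ⊗ₜ[ℂ] Y2)
      - ((q:ℂ)^2) • (((-(q:ℂ)) • (X1 ⊗ₜ[ℂ] star Y1) + X2 ⊗ₜ[ℂ] Y2) *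
          ((-(q:ℂ)) • (star X1 ⊗ₜ[ℂ] Y1) + star X2 ⊗ₜ[ℂ] star Y2))
      = ((1 - q^2 : ℝ) : ℂ) • (1 : A ⊗[ℂ] B)) ∧
    ((1 - ((-(q:ℂ)) • (X1 ⊗ₜ[ℂ] star Y1) + X2 ⊗ₜ[ℂ] Y2) *
          ((-(q:ℂ)) • (star X1 ⊗ₜ[ℂ] Y1) + star X2 ⊗ₜ[ℂ] star Y2)) *
        ((-(q:ℂ)) • (X1 ⊗ₜ[ℂ] star Y1) + X2 ⊗ₜ[ℂ] Y2)
      = ((q:ℂ)^2) • (((-(q:ℂ)) • (X1 ⊗ₜ[ℂ] star Y1) + X2 ⊗ₜ[ℂ] Y2) *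
          (1 - ((-(q:ℂ)) • (X1 ⊗ₜ[ℂ] star Y1) + X2 ⊗ₜ[ℂ] Y2) *
            ((-(q:ℂ)) • (star X1 ⊗ₜ[ℂ] Y1) + star X2 ⊗ₜ[ℂ] star Y2)))) ∧
    (((-(q:ℂ)) • (star X1 ⊗ₜ[ℂ] Y1) + star X2 ⊗ₜ[ℂ] star Y2) *
        (1 - ((-(q:ℂ)) • (X1 ⊗ₜ[ℂ] star Y1) + X2 ⊗ₜ[ℂ] Y2) *
          ((-(q:ℂ)) • (star X1 ⊗ₜ[ℂ] Y1) + star X2 ⊗ₜ[ℂ] star Y2))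
      = ((q:ℂ)^2) • ((1 - ((-(q:ℂ)) • (X1 ⊗ₜ[ℂ] star Y1) + X2 ⊗ₜ[ℂ] Y2) *
          ((-(q:ℂ)) • (star X1 ⊗ₜ[ℂ] Y1) + star X2 ⊗ₜ[ℂ] star Y2)) *
          ((-(q:ℂ)) • (star X1 ⊗ₜ[ℂ] Y1) + star X2 ⊗ₜ[ℂ] star Y2))) := by
  have hST := tensorTStar_mul_tensorT hX hY
  exact ⟨tensorTStar_mul_tensorT_sub hX hY, one_sub_mul_mul_eq_smul_mul_one_sub_mul hST,
    mul_one_sub_mul_eq_smul_one_sub_mul_mul hST⟩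

/-- **Lemma 4.2**: with `T = -q X₁⊗Y₁* + X₂⊗Y₂` and `T* = -q X₁*⊗Y₁ + X₂*⊗Y₂*` in `X̃⊗Ỹ`,
one has `T*T - q² T T* = (1-q²)·(1⊗1)`; equivalently, with `R = TT*`,
`(1-R)T = q² T(1-R)` and `T*(1-R) = q² (1-R)T*`.  (Since `X̃`, `Ỹ` are universal among
complex `*`-algebras with generators satisfying the relations, the identity in `X̃⊗Ỹ` is
equivalent to its validity for all such algebras.) -/
theorem commutation_T_with_one_sub_R
    (q : ℝ) (hq0 : 0 < q) (hq1 : q < 1)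
    {A B : Type*} [Ring A] [Algebra ℂ A] [StarRing A] [StarModule ℂ A]
    [Ring B] [Algebra ℂ B] [StarRing B] [StarModule ℂ B]
    (X1 X2 : A) (Y1 Y2 : B) (hX : XRel q X1 X2) (hY : YRel q Y1 Y2) :
    (((-(q:ℂ)) • (star X1 ⊗ₜ[ℂ] Y1) + star X2 ⊗ₜ[ℂ] star Y2) *
        ((-(q:ℂ)) • (X1 ⊗ₜ[ℂ] star Y1) + X2 ⊗ₜ[ℂ] Y2)
      - ((q:ℂ)^2) • (((-(q:ℂ)) • (X1 ⊗ₜ[ℂ] star Y1) + X2 ⊗ₜ[ℂ] Y2) *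
          ((-(q:ℂ)) • (star X1 ⊗ₜ[ℂ] Y1) + star X2 ⊗ₜ[ℂ] star Y2))
      = ((1 - q^2 : ℝ) : ℂ) • (1 : A ⊗[ℂ] B)) ∧
    ((1 - ((-(q:ℂ)) • (X1 ⊗ₜ[ℂ] star Y1) + X2 ⊗ₜ[ℂ] Y2) *
          ((-(q:ℂ)) • (star X1 ⊗ₜ[ℂ] Y1) + star X2 ⊗ₜ[ℂ] star Y2)) *
        ((-(q:ℂ)) • (X1 ⊗ₜ[ℂ] star Y1) + X2 ⊗ₜ[ℂ] Y2)
      = ((q:ℂ)^2) • (((-(q:ℂ)) • (X1 ⊗ₜ[ℂ] star Y1) + X2 ⊗ₜ[ℂ] Y2) *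
          (1 - ((-(q:ℂ)) • (X1 ⊗ₜ[ℂ] star Y1) + X2 ⊗ₜ[ℂ] Y2) *
            ((-(q:ℂ)) • (star X1 ⊗ₜ[ℂ] Y1) + star X2 ⊗ₜ[ℂ] star Y2)))) ∧
    (((-(q:ℂ)) • (star X1 ⊗ₜ[ℂ] Y1) + star X2 ⊗ₜ[ℂ] star Y2) *
        (1 - ((-(q:ℂ)) • (X1 ⊗ₜ[ℂ] star Y1) + X2 ⊗ₜ[ℂ] Y2) *
          ((-(q:ℂ)) • (star X1 ⊗ₜ[ℂ] Y1) + star X2 ⊗ₜ[ℂ] star Y2))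
      = ((q:ℂ)^2) • ((1 - ((-(q:ℂ)) • (X1 ⊗ₜ[ℂ] star Y1) + X2 ⊗ₜ[ℂ] Y2) *
          ((-(q:ℂ)) • (star X1 ⊗ₜ[ℂ] Y1) + star X2 ⊗ₜ[ℂ] star Y2)) *
          ((-(q:ℂ)) • (star X1 ⊗ₜ[ℂ] Y1) + star X2 ⊗ₜ[ℂ] star Y2))) :=
  commutation_T_with_one_sub_R_general q X1 X2 Y1 Y2 hX hY
end
end

section
/- Monomial basis of X̃ (Corollary 3.3). Let 0 < q < 1. The set of monomials { X₁^r (X₁*)^s X₂^t (X₂*)^u : r, s, t, u ∈ ℤ₊ } is a basis of X̃ as a complex vector space (it is linearly independent and spans X̃). -/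
set_option maxHeartbeats 1000000


noncomputable section

/-- `(A, x1, x2)` is a realization of the `*`-algebra `X̃`: the relations hold and
`(A, x1, x2)` is universal among complex `*`-algebras with two elements satisfying them;
this characterizes the quotient of the free unital complex `*`-algebra on two generators
by the two-sided `*`-ideal generated by the relations. -/
structure IsXtilde (q : ℝ) (A : Type) [Ring A] [Algebra ℂ A] [StarRing A] [StarModule ℂ A]
    (x1 x2 : A) : Prop where
  rel : XRel q x1 x2
  universal : ∀ (B : Type) [Ring B] [Algebra ℂ B] [StarRing B] [StarModule ℂ B],
    ∀ y1 y2 : B, XRel q y1 y2 → ∃! f : A →⋆ₐ[ℂ] B, f x1 = y1 ∧ f x2 = y2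

namespace XtildeProof

open MulOpposite

abbrev V : Type := (ℕ × ℕ) →₀ ℂ

def e (i : ℕ × ℕ) : V := Finsupp.single i 1

def mkOp (f : ℕ × ℕ → V) : Module.End ℂ V :=
  Finsupp.lsum ℂ (fun i => LinearMap.toSpanSingleton ℂ V (f i))

@[simp] lemma mkOp_e (f : ℕ × ℕ → V) (i : ℕ × ℕ) : mkOp f (e i) = f i := by
  simp [mkOp, e, Finsupp.lsum_single, LinearMap.toSpanSingleton_apply]

lemma end_ext {f g : Module.End ℂ V} (h : ∀ i, f (e i) = g (e i)) : f = g := by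
  apply Finsupp.lhom_ext
  intro a b
  have : (Finsupp.single a b : V) = b • e a := by simp [e, Finsupp.smul_single]
  rw [this, map_smul, map_smul, h]

def A2 : Module.End ℂ V := mkOp fun i => e (i.1, i.2+1)

variable (q : ℝ)

def A1 : Module.End ℂ V := mkOp fun i => ((q:ℂ)^i.2) • e (i.1+1, i.2)
def A1' : Module.End ℂ V := mkOp fun i => ((q:ℂ)^i.2 * (1 - (q:ℂ)^(2*i.1))) • e (i.1-1, i.2)
def A2' : Module.End ℂ V := mkOp fun i => (1 - (q:ℂ)^(2*i.2)) • e (i.1, i.2-1)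

@[simp] lemma A1_e (m n : ℕ) : A1 q (e (m,n)) = ((q:ℂ)^n) • e (m+1, n) := by simp [A1]
@[simp] lemma A1'_e (m n : ℕ) :
    A1' q (e (m,n)) = ((q:ℂ)^n * (1 - (q:ℂ)^(2*m))) • e (m-1, n) := by simp [A1']
@[simp] lemma A2_e (m n : ℕ) : A2 (e (m,n)) = e (m, n+1) := by simp [A2]
@[simp] lemma A2'_e (m n : ℕ) :
    A2' q (e (m,n)) = (1 - (q:ℂ)^(2*n)) • e (m, n-1) := by simp [A2']

/-! ## The star algebra of pairs -/

def PP : Type := (Module.End ℂ V) × (Module.End ℂ V)ᵐᵒᵖ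

instance : Ring PP := inferInstanceAs (Ring ((Module.End ℂ V) × (Module.End ℂ V)ᵐᵒᵖ))

instance : SMul ℂ PP :=
  ⟨fun c p => ((c • Prod.fst p : Module.End ℂ V), op ((starRingEnd ℂ c) • unop (Prod.snd p)))⟩

def PP.mk (T T' : Module.End ℂ V) : PP := (T, op T')

lemma PP.cases (p : PP) : p = PP.mk (Prod.fst p) (unop (Prod.snd p)) := rfl

lemma PP.mk_mul (a b c d : Module.End ℂ V) : PP.mk a b * PP.mk c d = PP.mk (a * c) (d * b) := rfl

lemma PP.mk_add (a b c d : Module.End ℂ V) : PP.mk a b + PP.mk c d = PP.mk (a + c) (b + d) := rfl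

lemma PP.mk_smul (c : ℂ) (a b : Module.End ℂ V) :
    c • PP.mk a b = PP.mk (c • a) ((starRingEnd ℂ c) • b) := rfl

lemma PP.one_def : (1 : PP) = PP.mk 1 1 := rfl

lemma PP.mk_sub (a b c d : Module.End ℂ V) : PP.mk a b - PP.mk c d = PP.mk (a - c) (b - d) := rfl

lemma PP.mk_inj_iff {a b c d : Module.End ℂ V} : PP.mk a b = PP.mk c d ↔ a = c ∧ b = d := by
  constructor
  · intro h
    exact ⟨congrArg Prod.fst h, MulOpposite.op_injective (congrArg Prod.snd h)⟩
  · rintro ⟨rfl, rfl⟩; rfl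

instance : Module ℂ PP where
  one_smul p := by
    rw [PP.cases p, PP.mk_smul, PP.mk_inj_iff]; simp
  mul_smul x y p := by
    rw [PP.cases p, PP.mk_smul, PP.mk_smul, PP.mk_smul, PP.mk_inj_iff]
    simp [mul_smul]
  smul_zero c := by
    have h0 : (0 : PP) = PP.mk 0 0 := rfl
    rw [h0, PP.mk_smul, PP.mk_inj_iff]; simp
  smul_add c p r := by
    rw [PP.cases p, PP.cases r, PP.mk_add, PP.mk_smul, PP.mk_smul, PP.mk_smul, PP.mk_add,
      PP.mk_inj_iff]
    constructor <;> exact smul_add _ _ _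
  add_smul x y p := by
    rw [PP.cases p, PP.mk_smul, PP.mk_smul, PP.mk_smul, PP.mk_add, PP.mk_inj_iff]
    constructor
    · exact add_smul _ _ _
    · rw [map_add]; exact add_smul _ _ _
  zero_smul p := by
    have h0 : (0 : PP) = PP.mk 0 0 := rfl
    rw [PP.cases p, PP.mk_smul, h0, PP.mk_inj_iff]; simp

instance : StarRing PP where
  star p := (unop (Prod.snd p), op (Prod.fst p))
  star_involutive _ := rfl
  star_mul _ _ := rfl
  star_add _ _ := rfl

lemma PP.star_mk (a b : Module.End ℂ V) : star (PP.mk a b) = PP.mk b a := rfl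

instance : StarModule ℂ PP := by
  constructor
  intro c p
  rw [PP.cases p, PP.mk_smul, PP.star_mk, PP.star_mk, PP.mk_smul, PP.mk_inj_iff]
  simp

instance : Algebra ℂ PP := by
  refine Algebra.ofModule ?_ ?_
  · intro r x y
    rw [PP.cases x, PP.cases y, PP.mk_smul, PP.mk_mul, PP.mk_mul, PP.mk_smul, PP.mk_inj_iff]
    exact ⟨smul_mul_assoc r _ _, mul_smul_comm _ _ _⟩
  · intro r x y
    rw [PP.cases x, PP.cases y, PP.mk_smul, PP.mk_mul, PP.mk_mul, PP.mk_smul, PP.mk_inj_iff]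
    exact ⟨mul_smul_comm r _ _, smul_mul_assoc _ _ _⟩


/-! ## relations in the model -/

variable {q : ℝ}

lemma R1a : A1 q * A2 = (q:ℂ) • (A2 * A1 q) := by
  apply end_ext; rintro ⟨m, n⟩
  simp only [Module.End.mul_apply, A1_e, A2_e, A1'_e, A2'_e, LinearMap.smul_apply, map_smul,
    smul_smul]
  congr 1
  ring

lemma R1b : A2' q * A1' q = (q:ℂ) • (A1' q * A2' q) := by
  apply end_ext; rintro ⟨m, n⟩
  rcases n with _ | n <;>
  simp only [Module.End.mul_apply, A1_e, A2_e, A1'_e, A2'_e, LinearMap.smul_apply, map_smul,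
    smul_smul, pow_zero, sub_self, mul_zero, zero_mul, zero_smul, smul_zero, map_zero,
    Nat.add_sub_cancel]
  all_goals module

lemma R2a : A1' q * A2 = (q:ℂ) • (A2 * A1' q) := by
  apply end_ext; rintro ⟨m, n⟩
  simp only [Module.End.mul_apply, A1_e, A2_e, A1'_e, A2'_e, LinearMap.smul_apply, map_smul,
    smul_smul]
  congr 1
  ring

lemma R2b : A2' q * A1 q = (q:ℂ) • (A1 q * A2' q) := by
  apply end_ext; rintro ⟨m, n⟩
  rcases n with _ | n <;>
  simp only [Module.End.mul_apply, A1_e, A2_e, A1'_e, A2'_e, LinearMap.smul_apply, map_smul,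
    smul_smul, pow_zero, sub_self, mul_zero, zero_mul, zero_smul, smul_zero, map_zero,
    Nat.add_sub_cancel]
  all_goals module

lemma R3a : A2' q * A2 = ((q:ℂ)^2) • (A2 * A2' q) + ((1 - q^2 : ℝ) : ℂ) • (1 : Module.End ℂ V) := by
  apply end_ext; rintro ⟨m, n⟩
  rcases n with _ | n <;>
  simp only [Module.End.mul_apply, A2_e, A2'_e, LinearMap.smul_apply, map_smul, smul_smul,
    LinearMap.add_apply, Module.End.one_apply, pow_zero, sub_self, mul_zero, zero_mul, zero_smul,
    smul_zero, map_zero, Nat.add_sub_cancel, zero_add]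
  all_goals (push_cast; module)

lemma R4a : A1' q * A1 q = ((q:ℂ)^2) • (A1 q * A1' q)
    + ((1 - q^2 : ℝ) : ℂ) • ((1 : Module.End ℂ V) - A2 * A2' q) := by
  apply end_ext; rintro ⟨m, n⟩
  rcases m with _ | m <;> rcases n with _ | n <;>
  simp only [Module.End.mul_apply, A1_e, A1'_e, A2_e, A2'_e, LinearMap.smul_apply, map_smul,
    smul_smul, LinearMap.add_apply, Module.End.one_apply, LinearMap.sub_apply, pow_zero, sub_self,
    mul_zero, zero_mul, mul_one, one_mul, zero_smul, smul_zero, map_zero, Nat.add_sub_cancel,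
    zero_add, sub_zero, map_sub, smul_sub]
  all_goals (push_cast; module)

def xx1 (q : ℝ) : PP := PP.mk (A1 q) (A1' q)
def xx2 (q : ℝ) : PP := PP.mk A2 (A2' q)

lemma conj_coe (r : ℝ) : (starRingEnd ℂ) (r : ℂ) = (r : ℂ) := Complex.conj_ofReal r

lemma hrelPP (q : ℝ) : XRel q (xx1 q) (xx2 q) := by
  unfold XRel xx1 xx2
  refine ⟨?_, ?_, ?_, ?_⟩
  · rw [PP.mk_mul, PP.mk_mul, PP.mk_smul, conj_coe, PP.mk_inj_iff]
    exact ⟨R1a, R1b⟩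
  · rw [show star (PP.mk (A1 q) (A1' q)) = PP.mk (A1' q) (A1 q) from rfl,
      PP.mk_mul, PP.mk_mul, PP.mk_smul, conj_coe, PP.mk_inj_iff]
    exact ⟨R2a, R2b⟩
  · rw [show star (PP.mk A2 (A2' q)) = PP.mk (A2' q) A2 from rfl,
      PP.mk_mul, PP.mk_mul, PP.one_def, PP.mk_smul, PP.mk_smul, conj_coe,
      show ((starRingEnd ℂ) ((q:ℂ)^2)) = (q:ℂ)^2 by rw [map_pow, conj_coe],
      PP.mk_add, PP.mk_inj_iff]
    constructor <;> exact R3a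
  · rw [show star (PP.mk (A1 q) (A1' q)) = PP.mk (A1' q) (A1 q) from rfl,
      show star (PP.mk A2 (A2' q)) = PP.mk (A2' q) A2 from rfl,
      PP.mk_mul, PP.mk_mul, PP.mk_mul, PP.one_def, PP.mk_sub, PP.mk_smul, PP.mk_smul, conj_coe,
      show ((starRingEnd ℂ) ((q:ℂ)^2)) = (q:ℂ)^2 by rw [map_pow, conj_coe],
      PP.mk_add, PP.mk_inj_iff]
    constructor <;> exact R4a


/-! ## polynomial helpers -/

open Polynomial in
def linPoly (q : ℝ) (S : ℕ) (s : ℕ) : Polynomial ℂ :=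
  ∏ j ∈ Finset.range s, (C (-((q:ℂ)^(2*(S-j)))) * X + C 1)

def Pc (q : ℝ) (s m : ℕ) : ℂ := ∏ j ∈ Finset.range s, (1 - (q:ℂ)^(2*(m-j)))

section Poly

variable {q : ℝ} (hq0 : 0 < q) (hq1 : q < 1)

include hq0 in
lemma qC_ne : (q:ℂ) ≠ 0 := by
  simp only [ne_eq, Complex.ofReal_eq_zero]
  exact ne_of_gt hq0

include hq0 in
lemma linPoly_factor_ne (S j : ℕ) :
    (Polynomial.C (-((q:ℂ)^(2*(S-j)))) * Polynomial.X + Polynomial.C 1) ≠ 0 := by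
  have h : (-((q:ℂ)^(2*(S-j)))) ≠ 0 :=
    neg_ne_zero.2 (pow_ne_zero _ (qC_ne hq0))
  intro hc
  have := Polynomial.natDegree_linear (b := (1:ℂ)) h
  rw [hc] at this
  simp at this

include hq0 in
lemma linPoly_natDegree (S s : ℕ) : (linPoly q S s).natDegree = s := by
  rw [linPoly, Polynomial.natDegree_prod _ _ (fun j _ => linPoly_factor_ne hq0 S j)]
  have : ∀ j ∈ Finset.range s,
      (Polynomial.C (-((q:ℂ)^(2*(S-j)))) * Polynomial.X + Polynomial.C 1).natDegree = 1 := by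
    intro j _
    exact Polynomial.natDegree_linear (neg_ne_zero.2 (pow_ne_zero _ (qC_ne hq0)))
  rw [Finset.sum_congr rfl this]
  simp

include hq0 in
lemma linPoly_leadCoeff_ne (S s : ℕ) : (linPoly q S s).coeff s ≠ 0 := by
  have hd := linPoly_natDegree hq0 (q := q) S s
  have : (linPoly q S s).coeff s = (linPoly q S s).leadingCoeff := by
    rw [Polynomial.leadingCoeff, hd]
  rw [this, linPoly, Polynomial.leadingCoeff_prod]
  apply Finset.prod_ne_zero_iff.2
  intro j _
  rw [Polynomial.leadingCoeff_linear (neg_ne_zero.2 (pow_ne_zero _ (qC_ne hq0)))]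
  exact neg_ne_zero.2 (pow_ne_zero _ (qC_ne hq0))

lemma linPoly_eval {S s : ℕ} (hs : s ≤ S) (m : ℕ) :
    (linPoly q S s).eval ((q:ℂ)^(2*m)) = Pc q s (m + S) := by
  rw [linPoly, Polynomial.eval_prod, Pc]
  apply Finset.prod_congr rfl
  intro j hj
  have hj' : j ≤ S := le_trans (le_of_lt (Finset.mem_range.1 hj)) hs
  have h1 : (m + S) - j = m + (S - j) := by omega
  have h2 : 2 * (m + (S - j)) = 2*(S-j) + 2*m := by ring
  rw [h1, h2, pow_add]
  simp
  ring

include hq0 hq1 in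
lemma zero_of_eval (R : Polynomial ℂ) (h : ∀ m : ℕ, R.eval ((q:ℂ)^(2*m)) = 0) : R = 0 := by
  apply R.eq_zero_of_infinite_isRoot
  apply Set.infinite_of_injective_forall_mem (f := fun m : ℕ => (q:ℂ)^(2*m))
  · intro a b hab
    simp only [] at hab
    have h2 : (q:ℝ)^(2*a) = (q:ℝ)^(2*b) := by
      have : (((q:ℝ)^(2*a) : ℝ) : ℂ) = (((q:ℝ)^(2*b) : ℝ) : ℂ) := by
        push_cast
        exact hab
      exact_mod_cast this
    have hinj := (pow_right_strictAnti₀ hq0 hq1).injective h2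
    omega
  · intro m
    exact h m

include hq0 in
lemma degree_indep :
    ∀ F : Finset ℕ, ∀ g : ℕ → ℂ, ∀ S : ℕ,
      (∑ s ∈ F, g s • linPoly q S s) = 0 → ∀ s ∈ F, g s = 0 := by
  intro F
  induction F using Finset.strongInduction with
  | _ F ih =>
    intro g S hsum s hs
    have hne : F.Nonempty := ⟨s, hs⟩
    set M := F.max' hne with hM
    have hgM : g M = 0 := by
      have hc := congrArg (fun P => Polynomial.coeff P M) hsum
      simp only [Polynomial.finset_sum_coeff, Polynomial.coeff_smul, Polynomial.coeff_zero,
        smul_eq_mul] at hc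
      rw [Finset.sum_eq_single_of_mem M (F.max'_mem hne)] at hc
      · rcases mul_eq_zero.1 hc with h | h
        · exact h
        · exact absurd h (linPoly_leadCoeff_ne hq0 S M)
      · intro b hb hbM
        have hlt : b < M := lt_of_le_of_ne (F.le_max' b hb) hbM
        rw [Polynomial.coeff_eq_zero_of_natDegree_lt, mul_zero]
        rw [linPoly_natDegree hq0]
        exact hlt
    rcases eq_or_ne s M with rfl | hsM
    · exact hgM
    · have hsum' : (∑ s' ∈ F.erase M, g s' • linPoly q S s') = 0 := by
        have h2 := Finset.sum_erase_add F (fun s' => g s' • linPoly q S s') (F.max'_mem hne)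
        simp only [← hM, hgM, zero_smul, add_zero] at h2
        rw [h2, hsum]
      exact ih (F.erase M) (Finset.erase_ssubset (F.max'_mem hne)) g S hsum'
        s (Finset.mem_erase.2 ⟨hsM, hs⟩)

include hq0 hq1 in
lemma fiber_sums_zero {ι : Type*} (S : ℕ) (F : Finset ι) (sfun : ι → ℕ)
    (hsle : ∀ i ∈ F, sfun i ≤ S) (γ : ι → ℂ)
    (hvan : ∀ m : ℕ, ∑ i ∈ F, γ i * Pc q (sfun i) (m + S) = 0) :
    ∀ s1, ∑ i ∈ F.filter (fun i => sfun i = s1), γ i = 0 := by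
  intro s1
  set g : ℕ → ℂ := fun s' => ∑ i ∈ F.filter (fun i => sfun i = s'), γ i with hg
  have hR : (∑ s' ∈ F.image sfun, g s' • linPoly q S s') = 0 := by
    apply zero_of_eval hq0 hq1
    intro m
    simp only [Polynomial.eval_finset_sum, Polynomial.eval_smul, smul_eq_mul]
    have heval : ∀ s' ∈ F.image sfun, g s' * (linPoly q S s').eval ((q:ℂ)^(2*m))
        = ∑ i ∈ F.filter (fun i => sfun i = s'), γ i * Pc q (sfun i) (m + S) := by
      intro s' hs'
      obtain ⟨i0, hi0, rfl⟩ := Finset.mem_image.1 hs'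
      rw [linPoly_eval (hsle i0 hi0)]
      simp only [hg]
      rw [Finset.sum_mul]
      apply Finset.sum_congr rfl
      intro i hi
      rw [(Finset.mem_filter.1 hi).2]
    rw [Finset.sum_congr rfl heval,
      Finset.sum_fiberwise_of_maps_to (fun i hi => Finset.mem_image_of_mem sfun hi)]
    exact hvan m
  by_cases hmem : s1 ∈ F.image sfun
  · exact degree_indep hq0 (F.image sfun) g S hR s1 hmem
  · have : F.filter (fun i => sfun i = s1) = ∅ := by
      apply Finset.filter_false_of_mem
      intro i hi hcon
      exact hmem (hcon ▸ Finset.mem_image_of_mem sfun hi)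
    simp [this]

end Poly


/-! ## monomial evaluation -/

variable {q : ℝ}

lemma Pc_zero (n : ℕ) : Pc q 0 n = 1 := by simp [Pc]

lemma Pc_succ (u n : ℕ) : Pc q (u+1) n = Pc q u (n-1) * (1 - (q:ℂ)^(2*n)) := by
  rw [Pc, Pc, Finset.prod_range_succ']
  congr 1
  apply Finset.prod_congr rfl
  intro j _
  have h : n - (j+1) = n - 1 - j := by omega
  rw [h]

lemma pow_A2'_e (u m n : ℕ) :
    ((A2' q)^u) (e (m,n)) = (Pc q u n) • e (m, n - u) := by
  induction u generalizing n with
  | zero => simp [Pc_zero]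
  | succ u ih =>
    have h : n - 1 - u = n - (u+1) := by omega
    rw [pow_succ, Module.End.mul_apply, A2'_e, map_smul, ih, smul_smul, Pc_succ, h]
    module

lemma pow_A2_e (t m N : ℕ) : ((A2 : Module.End ℂ V)^t) (e (m,N)) = e (m, N + t) := by
  induction t generalizing N with
  | zero => simp
  | succ t ih =>
    have h : N + 1 + t = N + (t+1) := by omega
    rw [pow_succ, Module.End.mul_apply, A2_e, ih, h]

lemma pow_A1'_e (s m N : ℕ) :
    ((A1' q)^s) (e (m,N)) = ((q:ℂ)^(s*N) * Pc q s m) • e (m - s, N) := by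
  induction s generalizing m with
  | zero => simp [Pc_zero]
  | succ s ih =>
    have h : m - 1 - s = m - (s+1) := by omega
    rw [pow_succ, Module.End.mul_apply, A1'_e, map_smul, ih, smul_smul, Pc_succ, h]
    rw [show (s+1)*N = s*N + N by ring, pow_add]
    module

lemma pow_A1_e (r m N : ℕ) :
    ((A1 q)^r) (e (m,N)) = ((q:ℂ)^(r*N)) • e (m + r, N) := by
  induction r generalizing m with
  | zero => simp
  | succ r ih =>
    have h : m + 1 + r = m + (r+1) := by omega
    rw [pow_succ, Module.End.mul_apply, A1_e, map_smul, ih, smul_smul, h]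
    rw [show (r+1)*N = r*N + N by ring, pow_add]
    module

def MonV (q : ℝ) (p : ℕ × ℕ × ℕ × ℕ) : Module.End ℂ V :=
  A1 q ^ p.1 * A1' q ^ p.2.1 * A2 ^ p.2.2.1 * A2' q ^ p.2.2.2

lemma MonV_e (p : ℕ × ℕ × ℕ × ℕ) (m n : ℕ) :
    MonV q p (e (m,n)) =
      ((q:ℂ)^((p.1 + p.2.1) * ((n - p.2.2.2) + p.2.2.1)) * Pc q p.2.1 m * Pc q p.2.2.2 n) •
        e ((m - p.2.1) + p.1, (n - p.2.2.2) + p.2.2.1) := by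
  obtain ⟨r, s, t, u⟩ := p
  rw [MonV]
  simp only [Module.End.mul_apply]
  rw [pow_A2'_e]
  simp only [map_smul]
  rw [pow_A2_e, pow_A1'_e]
  simp only [map_smul]
  rw [pow_A1_e]
  simp only [smul_smul]
  rw [show (r + s) * ((n - u) + t) = s * ((n-u)+t) + r * ((n-u)+t) by ring, pow_add]
  module


/-! ## linear independence of monomials in the model -/

theorem MonV_indep (hq0 : 0 < q) (hq1 : q < 1) : LinearIndependent ℂ (MonV q) := by
  refine (linearIndependent_iff (R := ℂ) (v := MonV q)).mpr ?_
  intro l hl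
  ext p0
  simp only [Finsupp.coe_zero, Pi.zero_apply]
  by_cases hp0 : p0 ∈ l.support
  swap
  · exact Finsupp.notMem_support_iff.1 hp0
  obtain ⟨r0, s0, t0, u0⟩ := p0
  set S := l.support.sup (fun p => p.2.1) with hS
  set U := l.support.sup (fun p => p.2.2.2) with hU
  have hs0S : s0 ≤ S := Finset.le_sup (f := fun p => p.2.1) hp0
  have hu0U : u0 ≤ U := Finset.le_sup (f := fun p => p.2.2.2) hp0
  -- apply the relation to basis vectors
  have hl' : ∀ m n : ℕ, ∑ p ∈ l.support, l p • (MonV q p (e (m + S, n + U))) = 0 := by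
    intro m n
    have h1 := congrArg (fun T : Module.End ℂ V => T (e (m + S, n + U))) hl
    simp only [Finsupp.linearCombination_apply, LinearMap.zero_apply, Finsupp.sum,
      LinearMap.coe_sum, Finset.sum_apply, LinearMap.smul_apply] at h1
    exact h1
  -- extract the coordinate at the target index
  have hco : ∀ m n : ℕ, ∑ p ∈ l.support,
      (l p * ((q:ℂ)^((p.1 + p.2.1) * ((n + U - p.2.2.2) + p.2.2.1)) * Pc q p.2.1 (m + S) *
        Pc q p.2.2.2 (n + U))) *
      (if ((m + S - p.2.1) + p.1, (n + U - p.2.2.2) + p.2.2.1)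
          = ((m + S - s0) + r0, (n + U - u0) + t0) then 1 else 0) = 0 := by
    intro m n
    have h2 := congrArg (fun v : V => v ((m + S - s0) + r0, (n + U - u0) + t0)) (hl' m n)
    simp only [Finsupp.coe_zero, Pi.zero_apply, Finset.sum_apply', Finsupp.smul_apply,
      smul_eq_mul] at h2
    have h3 : ∑ p ∈ l.support,
        (l p * ((q:ℂ)^((p.1 + p.2.1) * ((n + U - p.2.2.2) + p.2.2.1)) * Pc q p.2.1 (m + S) *
          Pc q p.2.2.2 (n + U))) *
        (if ((m + S - p.2.1) + p.1, (n + U - p.2.2.2) + p.2.2.1)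
            = ((m + S - s0) + r0, (n + U - u0) + t0) then 1 else 0)
        = ∑ p ∈ l.support,
          l p * (MonV q p (e (m + S, n + U))) ((m + S - s0) + r0, (n + U - u0) + t0) := by
      apply Finset.sum_congr rfl
      intro p _
      rw [MonV_e]
      simp only [Finsupp.smul_apply, smul_eq_mul, e, Finsupp.single_apply]
      ring
    rw [h3]
    exact h2
  -- restrict to the matching shift class
  set D := l.support.filter
    (fun p : ℕ × ℕ × ℕ × ℕ => p.1 + s0 = r0 + p.2.1 ∧ p.2.2.1 + u0 = t0 + p.2.2.2) with hD
  have hDsum : ∀ m n : ℕ, ∑ p ∈ D,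
      l p * ((q:ℂ)^((p.1 + p.2.1) * ((n + U - p.2.2.2) + p.2.2.1)) * Pc q p.2.1 (m + S) *
        Pc q p.2.2.2 (n + U)) = 0 := by
    intro m n
    rw [hD, Finset.sum_filter]
    have h3 : ∑ p ∈ l.support,
        (if p.1 + s0 = r0 + p.2.1 ∧ p.2.2.1 + u0 = t0 + p.2.2.2 then
          l p * ((q:ℂ)^((p.1 + p.2.1) * ((n + U - p.2.2.2) + p.2.2.1)) * Pc q p.2.1 (m + S) *
            Pc q p.2.2.2 (n + U)) else 0)
        = ∑ p ∈ l.support,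
        (l p * ((q:ℂ)^((p.1 + p.2.1) * ((n + U - p.2.2.2) + p.2.2.1)) * Pc q p.2.1 (m + S) *
          Pc q p.2.2.2 (n + U))) *
        (if ((m + S - p.2.1) + p.1, (n + U - p.2.2.2) + p.2.2.1)
            = ((m + S - s0) + r0, (n + U - u0) + t0) then 1 else 0) := by
      apply Finset.sum_congr rfl
      intro p hp
      have hsle : p.2.1 ≤ S := Finset.le_sup (f := fun p => p.2.1) hp
      have hule : p.2.2.2 ≤ U := Finset.le_sup (f := fun p => p.2.2.2) hp
      have hiff : (p.1 + s0 = r0 + p.2.1 ∧ p.2.2.1 + u0 = t0 + p.2.2.2)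
          ↔ ((m + S - p.2.1) + p.1, (n + U - p.2.2.2) + p.2.2.1)
            = ((m + S - s0) + r0, (n + U - u0) + t0) := by
        rw [Prod.mk.injEq]
        omega
      rw [mul_ite, mul_one, mul_zero]
      by_cases hc : p.1 + s0 = r0 + p.2.1 ∧ p.2.2.1 + u0 = t0 + p.2.2.2
      · rw [if_pos hc, if_pos (hiff.1 hc)]
      · rw [if_neg hc, if_neg (fun h => hc (hiff.2 h))]
    rw [h3]
    exact hco m n
  -- stage 1: separate the s-degrees
  have hstage1 : ∀ n : ℕ, ∑ p ∈ D.filter (fun p => p.2.1 = s0),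
      l p * ((q:ℂ)^((p.1 + p.2.1) * ((n + U - p.2.2.2) + p.2.2.1)) * Pc q p.2.2.2 (n + U)) = 0 := by
    intro n
    apply fiber_sums_zero hq0 hq1 S D (fun p => p.2.1)
      (fun p hp => Finset.le_sup (f := fun p => p.2.1) (Finset.mem_filter.1 hp).1)
    intro m
    rw [← hDsum m n]
    apply Finset.sum_congr rfl
    intro p _
    ring
  -- p ∈ E has p.1 = r0
  set E := D.filter (fun p : ℕ × ℕ × ℕ × ℕ => p.2.1 = s0) with hE
  have hEfacts : ∀ p ∈ E, p.1 = r0 ∧ p.2.1 = s0 ∧ p.2.2.2 ≤ U ∧ p.2.2.1 + u0 = t0 + p.2.2.2 := by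
    intro p hp
    rw [hE, Finset.mem_filter, hD, Finset.mem_filter] at hp
    obtain ⟨⟨hmem, hc1, hc2⟩, hc3⟩ := hp
    exact ⟨by omega, hc3, Finset.le_sup (f := fun p => p.2.2.2) hmem, hc2⟩
  -- stage 1.5: strip the q^{k n} factor
  have hstage2 : ∀ n : ℕ, ∑ p ∈ E,
      (l p * (q:ℂ)^((r0 + s0) * ((U - p.2.2.2) + p.2.2.1))) * Pc q p.2.2.2 (n + U) = 0 := by
    intro n
    have h3 := hstage1 n
    have h4 : ∑ p ∈ E, l p * ((q:ℂ)^((p.1 + p.2.1) * ((n + U - p.2.2.2) + p.2.2.1)) *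
        Pc q p.2.2.2 (n + U))
        = (q:ℂ)^((r0 + s0) * n) * ∑ p ∈ E,
          (l p * (q:ℂ)^((r0 + s0) * ((U - p.2.2.2) + p.2.2.1))) * Pc q p.2.2.2 (n + U) := by
      rw [Finset.mul_sum]
      apply Finset.sum_congr rfl
      intro p hp
      obtain ⟨h1, h2, h3, h4⟩ := hEfacts p hp
      rw [h1, h2]
      rw [show (r0 + s0) * ((n + U - p.2.2.2) + p.2.2.1)
          = (r0 + s0) * n + (r0 + s0) * ((U - p.2.2.2) + p.2.2.1) by
        have : (n + U - p.2.2.2) + p.2.2.1 = n + ((U - p.2.2.2) + p.2.2.1) := by omega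
        rw [this, Nat.mul_add]]
      rw [pow_add]
      ring
    rw [h4] at h3
    rcases mul_eq_zero.1 h3 with h | h
    · exact absurd h (pow_ne_zero _ (qC_ne hq0))
    · exact h
  -- stage 2: separate the u-degrees
  have hstage3 := fiber_sums_zero hq0 hq1 U E (fun p => p.2.2.2)
    (fun p hp => (hEfacts p hp).2.2.1)
    (fun p => l p * (q:ℂ)^((r0 + s0) * ((U - p.2.2.2) + p.2.2.1)))
    (fun n => by rw [← hstage2 n])
    u0
  -- the fiber at u0 is exactly {p0}
  have hsingle : E.filter (fun p : ℕ × ℕ × ℕ × ℕ => p.2.2.2 = u0) = {(r0, s0, t0, u0)} := by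
    apply Finset.ext
    intro p
    rw [Finset.mem_filter, Finset.mem_singleton]
    constructor
    · rintro ⟨hpE, hpu⟩
      obtain ⟨h1, h2, _, h4⟩ := hEfacts p hpE
      obtain ⟨a, b, c, d⟩ := p
      simp only [] at h1 h2 h4 hpu
      subst h1 h2 hpu
      have : c = t0 := by omega
      rw [this]
    · rintro rfl
      refine ⟨?_, rfl⟩
      rw [hE, Finset.mem_filter, hD, Finset.mem_filter]
      exact ⟨⟨hp0, rfl, rfl⟩, rfl⟩
  rw [hsingle, Finset.sum_singleton] at hstage3
  rcases mul_eq_zero.1 hstage3 with h | h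
  · exact h
  · exact absurd h (pow_ne_zero _ (qC_ne hq0))


/-! ## spanning: consequences of the relations -/

section SpanA

variable {AA : Type*} [Ring AA] [Algebra ℂ AA] [StarRing AA] [StarModule ℂ AA]
variable {q : ℝ} {x1 x2 : AA}

def MonA (x1 x2 : AA) (p : ℕ × ℕ × ℕ × ℕ) : AA :=
  x1 ^ p.1 * (star x1) ^ p.2.1 * x2 ^ p.2.2.1 * (star x2) ^ p.2.2.2

def MspA (x1 x2 : AA) : Submodule ℂ AA := Submodule.span ℂ (Set.range (MonA x1 x2))

lemma Mon_mem (p : ℕ × ℕ × ℕ × ℕ) : MonA x1 x2 p ∈ MspA x1 x2 :=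
  Submodule.subset_span ⟨p, rfl⟩

variable (hq0 : 0 < q) (hrel : XRel q x1 x2)

include hq0 hrel

lemma L_d1 : x2 * x1 = (q:ℂ)⁻¹ • (x1 * x2) := by
  rw [hrel.1, smul_smul, inv_mul_cancel₀ (qC_ne hq0), one_smul]

lemma L_d2 : x2 * star x1 = (q:ℂ)⁻¹ • (star x1 * x2) := by
  rw [hrel.2.1, smul_smul, inv_mul_cancel₀ (qC_ne hq0), one_smul]

omit hq0 in
lemma L_d3 : star x2 * x1 = (q:ℂ) • (x1 * star x2) := by
  have h := congrArg star hrel.2.1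
  simpa [star_mul, star_star, star_smul, Complex.star_def, Complex.conj_ofReal] using h

omit hq0 in
lemma L_d4 : star x2 * star x1 = (q:ℂ) • (star x1 * star x2) := by
  have h := congrArg star hrel.1
  simpa [star_mul, star_star, star_smul, Complex.star_def, Complex.conj_ofReal] using h

lemma L_P1 : (x2 * star x2) * x1 = x1 * (x2 * star x2) := by
  calc (x2 * star x2) * x1 = x2 * (star x2 * x1) := by rw [mul_assoc]
    _ = x2 * ((q:ℂ) • (x1 * star x2)) := by rw [L_d3 hrel]
    _ = (q:ℂ) • ((x2 * x1) * star x2) := by rw [mul_smul_comm, mul_assoc]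
    _ = (q:ℂ) • (((q:ℂ)⁻¹ • (x1 * x2)) * star x2) := by rw [L_d1 hq0 hrel]
    _ = x1 * (x2 * star x2) := by
        rw [smul_mul_assoc, smul_smul, mul_inv_cancel₀ (qC_ne hq0), one_smul, mul_assoc]

lemma L_P2 : (x2 * star x2) * star x1 = star x1 * (x2 * star x2) := by
  calc (x2 * star x2) * star x1 = x2 * (star x2 * star x1) := by rw [mul_assoc]
    _ = x2 * ((q:ℂ) • (star x1 * star x2)) := by rw [L_d4 hrel]
    _ = (q:ℂ) • ((x2 * star x1) * star x2) := by rw [mul_smul_comm, mul_assoc]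
    _ = (q:ℂ) • (((q:ℂ)⁻¹ • (star x1 * x2)) * star x2) := by rw [L_d2 hq0 hrel]
    _ = star x1 * (x2 * star x2) := by
        rw [smul_mul_assoc, smul_smul, mul_inv_cancel₀ (qC_ne hq0), one_smul, mul_assoc]

lemma L_e1 : ∀ k : ℕ, x2 * x1^k = (((q:ℂ)⁻¹)^k) • (x1^k * x2) := by
  intro k
  induction k with
  | zero => simp
  | succ k ih =>
    calc x2 * x1^(k+1) = (x2 * x1^k) * x1 := by rw [pow_succ, mul_assoc]
      _ = ((q:ℂ)⁻¹)^k • (x1^k * (x2 * x1)) := by rw [ih, smul_mul_assoc, mul_assoc]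
      _ = ((q:ℂ)⁻¹)^k • (x1^k * ((q:ℂ)⁻¹ • (x1 * x2))) := by rw [L_d1 hq0 hrel]
      _ = (((q:ℂ)⁻¹)^(k+1)) • (x1^(k+1) * x2) := by
          rw [mul_smul_comm, smul_smul, ← mul_assoc, ← pow_succ, ← pow_succ]

lemma L_e2 : ∀ k : ℕ, x2 * (star x1)^k = (((q:ℂ)⁻¹)^k) • ((star x1)^k * x2) := by
  intro k
  induction k with
  | zero => simp
  | succ k ih =>
    calc x2 * (star x1)^(k+1) = (x2 * (star x1)^k) * star x1 := by rw [pow_succ, mul_assoc]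
      _ = ((q:ℂ)⁻¹)^k • ((star x1)^k * (x2 * star x1)) := by rw [ih, smul_mul_assoc, mul_assoc]
      _ = ((q:ℂ)⁻¹)^k • ((star x1)^k * ((q:ℂ)⁻¹ • (star x1 * x2))) := by rw [L_d2 hq0 hrel]
      _ = (((q:ℂ)⁻¹)^(k+1)) • ((star x1)^(k+1) * x2) := by
          rw [mul_smul_comm, smul_smul, ← mul_assoc, ← pow_succ, ← pow_succ]

omit hq0 in
lemma L_e3 : ∀ k : ℕ, star x2 * x1^k = ((q:ℂ)^k) • (x1^k * star x2) := by
  intro k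
  induction k with
  | zero => simp
  | succ k ih =>
    calc star x2 * x1^(k+1) = (star x2 * x1^k) * x1 := by rw [pow_succ, mul_assoc]
      _ = ((q:ℂ))^k • (x1^k * (star x2 * x1)) := by rw [ih, smul_mul_assoc, mul_assoc]
      _ = ((q:ℂ))^k • (x1^k * ((q:ℂ) • (x1 * star x2))) := by rw [L_d3 hrel]
      _ = ((q:ℂ)^(k+1)) • (x1^(k+1) * star x2) := by
          rw [mul_smul_comm, smul_smul, ← mul_assoc, ← pow_succ, ← pow_succ]

omit hq0 in
lemma L_e4 : ∀ k : ℕ, star x2 * (star x1)^k = ((q:ℂ)^k) • ((star x1)^k * star x2) := by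
  intro k
  induction k with
  | zero => simp
  | succ k ih =>
    calc star x2 * (star x1)^(k+1) = (star x2 * (star x1)^k) * star x1 := by
          rw [pow_succ, mul_assoc]
      _ = ((q:ℂ))^k • ((star x1)^k * (star x2 * star x1)) := by rw [ih, smul_mul_assoc, mul_assoc]
      _ = ((q:ℂ))^k • ((star x1)^k * ((q:ℂ) • (star x1 * star x2))) := by rw [L_d4 hrel]
      _ = ((q:ℂ)^(k+1)) • ((star x1)^(k+1) * star x2) := by
          rw [mul_smul_comm, smul_smul, ← mul_assoc, ← pow_succ, ← pow_succ]

lemma L_eP : ∀ k : ℕ, (x2 * star x2) * (star x1)^k = (star x1)^k * (x2 * star x2) := by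
  intro k
  induction k with
  | zero => simp
  | succ k ih =>
    calc (x2 * star x2) * (star x1)^(k+1) = ((x2 * star x2) * (star x1)^k) * star x1 := by
          rw [pow_succ, ← mul_assoc]
      _ = (star x1)^k * ((x2 * star x2) * star x1) := by rw [ih, mul_assoc]
      _ = (star x1)^k * (star x1 * (x2 * star x2)) := by rw [L_P2 hq0 hrel]
      _ = (star x1)^(k+1) * (x2 * star x2) := by rw [← mul_assoc, ← pow_succ]

omit hq0 in
lemma L_key2 : star x2 * x2 = ((q:ℂ)^2) • (x2 * star x2) + ((1:ℂ) - (q:ℂ)^2) • (1 : AA) := by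
  have h := hrel.2.2.1
  push_cast at h
  exact h

omit hq0 in
lemma L_e5 : ∀ t : ℕ, star x2 * x2^(t+1)
    = ((q:ℂ)^(2*(t+1))) • (x2^(t+1) * star x2) + ((1:ℂ) - (q:ℂ)^(2*(t+1))) • x2^t := by
  intro t
  induction t with
  | zero => simpa using L_key2 hrel
  | succ t ih =>
    calc star x2 * x2^(t+1+1) = (star x2 * x2^(t+1)) * x2 := by rw [pow_succ, mul_assoc]
      _ = ((q:ℂ)^(2*(t+1))) • (x2^(t+1) * (star x2 * x2))
          + ((1:ℂ) - (q:ℂ)^(2*(t+1))) • x2^(t+1) := by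
          rw [ih, add_mul, smul_mul_assoc, smul_mul_assoc, mul_assoc, ← pow_succ]
      _ = ((q:ℂ)^(2*(t+1))) • (x2^(t+1) * (((q:ℂ)^2) • (x2 * star x2)
            + ((1:ℂ) - (q:ℂ)^2) • (1 : AA)))
          + ((1:ℂ) - (q:ℂ)^(2*(t+1))) • x2^(t+1) := by rw [L_key2 hrel]
      _ = ((q:ℂ)^(2*(t+1+1))) • (x2^(t+1+1) * star x2)
          + ((1:ℂ) - (q:ℂ)^(2*(t+1+1))) • x2^(t+1) := by
          simp only [mul_add, mul_smul_comm, mul_one, ← mul_assoc, ← pow_succ]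
          match_scalars <;> ring

omit hq0 in
lemma L_key1 : star x1 * x1 = ((q:ℂ)^2) • (x1 * star x1) + ((1:ℂ) - (q:ℂ)^2) • (1 : AA)
    - ((1:ℂ) - (q:ℂ)^2) • (x2 * star x2) := by
  have h := hrel.2.2.2
  push_cast at h
  rw [h]
  rw [smul_sub]
  abel

lemma L_e6 : ∀ r : ℕ, star x1 * x1^(r+1)
    = ((q:ℂ)^(2*(r+1))) • (x1^(r+1) * star x1) + ((1:ℂ) - (q:ℂ)^(2*(r+1))) • x1^r
      - ((1:ℂ) - (q:ℂ)^(2*(r+1))) • (x1^r * (x2 * star x2)) := by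
  intro r
  induction r with
  | zero => simpa using L_key1 hrel
  | succ r ih =>
    calc star x1 * x1^(r+1+1) = (star x1 * x1^(r+1)) * x1 := by rw [pow_succ, mul_assoc]
      _ = ((q:ℂ)^(2*(r+1))) • (x1^(r+1) * (star x1 * x1))
          + ((1:ℂ) - (q:ℂ)^(2*(r+1))) • x1^(r+1)
          - ((1:ℂ) - (q:ℂ)^(2*(r+1))) • (x1^r * ((x2 * star x2) * x1)) := by
          rw [ih, sub_mul, add_mul, smul_mul_assoc, smul_mul_assoc, smul_mul_assoc,
            mul_assoc (x1^(r+1)) (star x1) x1, ← pow_succ, mul_assoc (x1^r) (x2 * star x2) x1]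
      _ = ((q:ℂ)^(2*(r+1))) • (x1^(r+1) * (star x1 * x1))
          + ((1:ℂ) - (q:ℂ)^(2*(r+1))) • x1^(r+1)
          - ((1:ℂ) - (q:ℂ)^(2*(r+1))) • (x1^(r+1) * (x2 * star x2)) := by
          rw [L_P1 hq0 hrel, ← mul_assoc (x1^r) x1 (x2 * star x2), ← pow_succ]
      _ = ((q:ℂ)^(2*(r+1))) • (x1^(r+1) * (((q:ℂ)^2) • (x1 * star x1)
            + ((1:ℂ) - (q:ℂ)^2) • (1 : AA) - ((1:ℂ) - (q:ℂ)^2) • (x2 * star x2)))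
          + ((1:ℂ) - (q:ℂ)^(2*(r+1))) • x1^(r+1)
          - ((1:ℂ) - (q:ℂ)^(2*(r+1))) • (x1^(r+1) * (x2 * star x2)) := by
          rw [L_key1 hrel]
      _ = ((q:ℂ)^(2*(r+1+1))) • (x1^(r+1+1) * star x1) + ((1:ℂ) - (q:ℂ)^(2*(r+1+1))) • x1^(r+1)
          - ((1:ℂ) - (q:ℂ)^(2*(r+1+1))) • (x1^(r+1) * (x2 * star x2)) := by
          simp only [mul_add, mul_sub, mul_smul_comm, mul_one, ← mul_assoc, ← pow_succ]
          match_scalars <;> ring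

/-! ## primed (right-factor) versions -/

lemma L_e1' (k : ℕ) (z : AA) : x2 * (x1^k * z) = (((q:ℂ)⁻¹)^k) • (x1^k * (x2 * z)) := by
  rw [← mul_assoc, L_e1 hq0 hrel, smul_mul_assoc, mul_assoc]

lemma L_e2' (k : ℕ) (z : AA) :
    x2 * ((star x1)^k * z) = (((q:ℂ)⁻¹)^k) • ((star x1)^k * (x2 * z)) := by
  rw [← mul_assoc, L_e2 hq0 hrel, smul_mul_assoc, mul_assoc]

omit hq0 in
lemma L_e3' (k : ℕ) (z : AA) : star x2 * (x1^k * z) = ((q:ℂ)^k) • (x1^k * (star x2 * z)) := by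
  rw [← mul_assoc, L_e3 hrel, smul_mul_assoc, mul_assoc]

omit hq0 in
lemma L_e4' (k : ℕ) (z : AA) :
    star x2 * ((star x1)^k * z) = ((q:ℂ)^k) • ((star x1)^k * (star x2 * z)) := by
  rw [← mul_assoc, L_e4 hrel, smul_mul_assoc, mul_assoc]

lemma L_eP' (k : ℕ) (z : AA) :
    (x2 * star x2) * ((star x1)^k * z) = (star x1)^k * ((x2 * star x2) * z) := by
  rw [← mul_assoc, L_eP hq0 hrel, mul_assoc]

omit hq0 in
lemma L_e5' (t : ℕ) (z : AA) : star x2 * (x2^(t+1) * z)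
    = ((q:ℂ)^(2*(t+1))) • (x2^(t+1) * (star x2 * z))
      + ((1:ℂ) - (q:ℂ)^(2*(t+1))) • (x2^t * z) := by
  rw [← mul_assoc, L_e5 hrel, add_mul, smul_mul_assoc, smul_mul_assoc, mul_assoc]

lemma L_e6' (r : ℕ) (z : AA) : star x1 * (x1^(r+1) * z)
    = ((q:ℂ)^(2*(r+1))) • (x1^(r+1) * (star x1 * z))
      + ((1:ℂ) - (q:ℂ)^(2*(r+1))) • (x1^r * z)
      - ((1:ℂ) - (q:ℂ)^(2*(r+1))) • (x1^r * ((x2 * star x2) * z)) := by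
  rw [← mul_assoc, L_e6 hq0 hrel, sub_mul, add_mul, smul_mul_assoc, smul_mul_assoc,
    smul_mul_assoc, mul_assoc, mul_assoc, mul_assoc]

omit hq0 hrel in
lemma MonA_eq (r s t u : ℕ) :
    MonA x1 x2 (r,s,t,u) = x1^r * ((star x1)^s * (x2^t * (star x2)^u)) := by
  simp [MonA, mul_assoc]

/-! ## tail span -/

def Tsp (x2 : AA) : Submodule ℂ AA :=
  Submodule.span ℂ (Set.range (fun d : ℕ × ℕ => x2^d.1 * (star x2)^d.2))

omit hq0 hrel in
lemma tail_mon_mem (t u : ℕ) : x2^t * (star x2)^u ∈ Tsp x2 :=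
  Submodule.subset_span ⟨(t,u), rfl⟩

omit hq0 hrel in
lemma tail_x2 (t u : ℕ) : x2 * (x2^t * (star x2)^u) ∈ Tsp x2 := by
  rw [← mul_assoc, ← pow_succ']
  exact tail_mon_mem t.succ u

omit hq0 in
lemma tail_y2 (t u : ℕ) : star x2 * (x2^t * (star x2)^u) ∈ Tsp x2 := by
  rcases t with _ | t
  · rw [pow_zero, one_mul, ← pow_succ']
    have := tail_mon_mem (x2 := x2) 0 (u+1)
    rwa [pow_zero, one_mul] at this
  · rw [L_e5' hrel t ((star x2)^u), ← pow_succ']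
    exact Submodule.add_mem _
      (Submodule.smul_mem _ _ (tail_mon_mem (t+1) (u+1)))
      (Submodule.smul_mem _ _ (tail_mon_mem t u))

omit hq0 hrel in
lemma tail_x2_span {w : AA} (hw : w ∈ Tsp x2) : x2 * w ∈ Tsp x2 := by
  induction hw using Submodule.span_induction with
  | mem w hwm =>
    obtain ⟨⟨t, u⟩, rfl⟩ := hwm
    exact tail_x2 t u
  | zero => rw [mul_zero]; exact Submodule.zero_mem _
  | add a b ha hb iha ihb => rw [mul_add]; exact Submodule.add_mem _ iha ihb
  | smul c a ha iha => rw [mul_smul_comm]; exact Submodule.smul_mem _ _ iha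

omit hq0 in
lemma tail_P (t u : ℕ) : (x2 * star x2) * (x2^t * (star x2)^u) ∈ Tsp x2 := by
  rw [mul_assoc]
  exact tail_x2_span (tail_y2 hrel t u)

omit hq0 hrel in
lemma prefix_mem (r s : ℕ) {w : AA} (hw : w ∈ Tsp x2) :
    x1^r * ((star x1)^s * w) ∈ MspA x1 x2 := by
  induction hw using Submodule.span_induction with
  | mem w hwm =>
    obtain ⟨⟨t, u⟩, rfl⟩ := hwm
    rw [← MonA_eq]
    exact Mon_mem (r,s,t,u)
  | zero => rw [mul_zero, mul_zero]; exact Submodule.zero_mem _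
  | add a b ha hb iha ihb => rw [mul_add, mul_add]; exact Submodule.add_mem _ iha ihb
  | smul c a ha iha =>
    rw [mul_smul_comm, mul_smul_comm]
    exact Submodule.smul_mem _ _ iha

/-! ## generator multiplication lemmas -/

omit hq0 hrel in
lemma m1 (p : ℕ × ℕ × ℕ × ℕ) : x1 * MonA x1 x2 p ∈ MspA x1 x2 := by
  obtain ⟨r, s, t, u⟩ := p
  have h : x1 * MonA x1 x2 (r,s,t,u) = MonA x1 x2 (r+1,s,t,u) := by
    simp only [MonA, ← mul_assoc, ← pow_succ']
  rw [h]
  exact Mon_mem _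

lemma m2 (p : ℕ × ℕ × ℕ × ℕ) : x2 * MonA x1 x2 p ∈ MspA x1 x2 := by
  obtain ⟨r, s, t, u⟩ := p
  rw [MonA_eq, L_e1' hq0 hrel, L_e2' hq0 hrel, mul_smul_comm]
  exact Submodule.smul_mem _ _ (Submodule.smul_mem _ _
    (prefix_mem r s (tail_x2 t u)))

lemma m3 (p : ℕ × ℕ × ℕ × ℕ) : star x2 * MonA x1 x2 p ∈ MspA x1 x2 := by
  obtain ⟨r, s, t, u⟩ := p
  rw [MonA_eq, L_e3' hrel, L_e4' hrel, mul_smul_comm]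
  exact Submodule.smul_mem _ _ (Submodule.smul_mem _ _
    (prefix_mem r s (tail_y2 hrel t u)))

lemma m4 (p : ℕ × ℕ × ℕ × ℕ) : star x1 * MonA x1 x2 p ∈ MspA x1 x2 := by
  obtain ⟨r, s, t, u⟩ := p
  rcases r with _ | r
  · rw [MonA_eq, pow_zero, one_mul, ← mul_assoc, ← pow_succ']
    have h : (star x1)^(s+1) * (x2^t * (star x2)^u) = MonA x1 x2 (0,s+1,t,u) := by
      rw [MonA_eq, pow_zero, one_mul]
    rw [h]
    exact Mon_mem _
  · rw [MonA_eq, L_e6' hq0 hrel]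
    refine Submodule.sub_mem _ (Submodule.add_mem _ ?_ ?_) ?_
    · apply Submodule.smul_mem
      have h : x1^(r+1) * (star x1 * ((star x1)^s * (x2^t * (star x2)^u)))
          = MonA x1 x2 (r+1,s+1,t,u) := by
        rw [MonA_eq, ← mul_assoc (star x1) ((star x1)^s), ← pow_succ']
      rw [h]
      exact Mon_mem _
    · apply Submodule.smul_mem
      rw [← MonA_eq]
      exact Mon_mem (r,s,t,u)
    · apply Submodule.smul_mem
      rw [L_eP' hq0 hrel]
      exact prefix_mem r s (tail_P hrel t u)

lemma gen_mul_mem {g a : AA} (hg : g = x1 ∨ g = x2 ∨ g = star x1 ∨ g = star x2)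
    (ha : a ∈ MspA x1 x2) : g * a ∈ MspA x1 x2 := by
  induction ha using Submodule.span_induction with
  | mem w hwm =>
    obtain ⟨p, rfl⟩ := hwm
    rcases hg with rfl | rfl | rfl | rfl
    · exact m1 p
    · exact m2 hq0 hrel p
    · exact m4 hq0 hrel p
    · exact m3 hq0 hrel p
  | zero => rw [mul_zero]; exact Submodule.zero_mem _
  | add a b ha hb iha ihb => rw [mul_add]; exact Submodule.add_mem _ iha ihb
  | smul c a ha iha => rw [mul_smul_comm]; exact Submodule.smul_mem _ _ iha

omit hq0 hrel in
lemma one_mem_MspA : (1:AA) ∈ MspA x1 x2 := by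
  have h : (1:AA) = MonA x1 x2 (0,0,0,0) := by simp [MonA]
  rw [h]
  exact Mon_mem _

end SpanA

end XtildeProof

/-! ## final assembly -/

namespace XtildeProof

def ppFst : PP →ₐ[ℂ] Module.End ℂ V where
  toFun p := Prod.fst p
  map_one' := rfl
  map_mul' _ _ := rfl
  map_zero' := rfl
  map_add' _ _ := rfl
  commutes' c := rfl

end XtildeProof


open XtildeProof

/-- **Corollary 3.3**: the monomials `X₁^r (X₁*)^s X₂^t (X₂*)^u`, for
`r, s, t, u ∈ ℤ₊`, form a linear basis of `X̃` over `ℂ`. -/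
theorem monomial_basis_Xtilde
    (q : ℝ) (hq0 : 0 < q) (hq1 : q < 1)
    (A : Type) [Ring A] [Algebra ℂ A] [StarRing A] [StarModule ℂ A]
    (X1 X2 : A) (hA : IsXtilde q A X1 X2) :
    LinearIndependent ℂ
      (fun p : ℕ × ℕ × ℕ × ℕ =>
        X1 ^ p.1 * (star X1) ^ p.2.1 * X2 ^ p.2.2.1 * (star X2) ^ p.2.2.2) ∧
    Submodule.span ℂ
      (Set.range (fun p : ℕ × ℕ × ℕ × ℕ =>
        X1 ^ p.1 * (star X1) ^ p.2.1 * X2 ^ p.2.2.1 * (star X2) ^ p.2.2.2)) = ⊤ := by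
  constructor
  · -- linear independence
    obtain ⟨f, ⟨hf1, hf2⟩, -⟩ := hA.universal PP (xx1 q) (xx2 q) (hrelPP q)
    refine LinearIndependent.of_comp (M' := Module.End ℂ V) (R := ℂ)
      (ppFst.toLinearMap.comp f.toAlgHom.toLinearMap) ?_
    have hcomp : (⇑(ppFst.toLinearMap.comp f.toAlgHom.toLinearMap)) ∘
        (fun p : ℕ × ℕ × ℕ × ℕ =>
          X1 ^ p.1 * (star X1) ^ p.2.1 * X2 ^ p.2.2.1 * (star X2) ^ p.2.2.2) = MonV q := by
      funext p
      simp only [LinearMap.comp_apply, AlgHom.toLinearMap_apply, Function.comp_apply,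
        StarAlgHom.coe_toAlgHom, map_mul, map_pow, map_star, hf1, hf2]
      rfl
    rw [hcomp]
    exact MonV_indep hq0 hq1
  · -- spanning
    have hX1 : X1 ∈ StarAlgebra.adjoin ℂ ({X1, X2} : Set A) :=
      StarAlgebra.subset_adjoin ℂ _ (by simp)
    have hX2 : X2 ∈ StarAlgebra.adjoin ℂ ({X1, X2} : Set A) :=
      StarAlgebra.subset_adjoin ℂ _ (by simp)
    have hrelSb : XRel q (⟨X1, hX1⟩ : StarAlgebra.adjoin ℂ ({X1, X2} : Set A)) ⟨X2, hX2⟩ := by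
      obtain ⟨h1, h2, h3, h4⟩ := hA.rel
      exact ⟨Subtype.ext h1, Subtype.ext h2, Subtype.ext h3, Subtype.ext h4⟩
    obtain ⟨g, ⟨hg1, hg2⟩, -⟩ :=
      hA.universal (StarAlgebra.adjoin ℂ ({X1, X2} : Set A)) ⟨X1, hX1⟩ ⟨X2, hX2⟩ hrelSb
    obtain ⟨h, -, huniq⟩ := hA.universal A X1 X2 hA.rel
    have hcomp1 : (StarAlgebra.adjoin ℂ ({X1, X2} : Set A)).subtype.comp g = h := by
      apply huniq
      constructor
      · rw [StarAlgHom.comp_apply, hg1]; rfl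
      · rw [StarAlgHom.comp_apply, hg2]; rfl
    have hid : (StarAlgHom.id ℂ A) = h := huniq _ ⟨rfl, rfl⟩
    have hmem : ∀ a : A, a ∈ StarAlgebra.adjoin ℂ ({X1, X2} : Set A) := by
      intro a
      have : ((StarAlgebra.adjoin ℂ ({X1, X2} : Set A)).subtype.comp g) a = a := by
        rw [hcomp1, ← hid]; rfl
      rw [← this]
      exact (g a).2
    show MspA X1 X2 = ⊤
    rw [eq_top_iff]
    intro a _
    have ha := hmem a
    rw [← StarSubalgebra.mem_toSubalgebra, StarAlgebra.adjoin_toSubalgebra,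
      ← Subalgebra.mem_toSubmodule, Algebra.adjoin_eq_span] at ha
    have hle : Submodule.span ℂ
        ((Submonoid.closure (({X1, X2} : Set A) ∪ star ({X1, X2} : Set A))) : Set A)
        ≤ MspA X1 X2 := by
      rw [Submodule.span_le]
      intro w hw
      rw [SetLike.mem_coe] at hw
      induction hw using Submonoid.closure_induction_left with
      | one => exact one_mem_MspA
      | mul_left x hx y hy ih =>
        have hg : x = X1 ∨ x = X2 ∨ x = star X1 ∨ x = star X2 := by
          rcases hx with hx | hx
          · rcases hx with hx | hx
            · exact Or.inl hx
            · exact Or.inr (Or.inl hx)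
          · rw [Set.mem_star] at hx
            rcases hx with hx | hx
            · refine Or.inr (Or.inr (Or.inl ?_))
              rw [← hx, star_star]
            · refine Or.inr (Or.inr (Or.inr ?_))
              rw [← hx, star_star]
        exact gen_mul_mem hq0 hA.rel hg ih
    exact hle ha

end
end

section
/- Connection formula for affine q-Krawtchouk polynomials with different N (Proposition 7.2). Let 0 < q < 1 and let t be real with 0 < tq < 1. For N ∈ ℤ₊, a ∈ ℤ with a ≤ N, and an integer l with 0 ≤ l ≤ min(N, N-a), one has for every x ∈ ℂ: K_l(x; t, N; q) = Σ_{k=0}^{l} [ (q^l;q^{-1})_k / (q;q)_k ] · q^{(a-N)k} · [ (q^{-a};q)_k / (q^{-N};q)_l ] · (q^{a-N};q)_{l-k} · K_{l-k}(x; t, N-a; q), where (q^l;q^{-1})_k = ∏_{j=0}^{k-1}(1 - q^{l-j}). -/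
open Finset

noncomputable section

/-- q-shifted factorial `(a;q)_n`. -/
def qPoch (a q : ℂ) (n : ℕ) : ℂ := ∏ k ∈ Finset.range n, (1 - a * q ^ k)

/-- `(q^N ; q^{-1})_l = ∏_{k<l} (1 - q^{N-k})`. -/
def qPochDec (q : ℂ) (N : ℤ) (l : ℕ) : ℂ := ∏ k ∈ Finset.range l, (1 - q ^ (N - (k:ℤ)))

/-- affine q-Krawtchouk polynomial `K_l(x;t,N;q)`, zero for `l < 0` or `l > N`. -/
def qKraw (l : ℤ) (x t : ℂ) (N : ℤ) (q : ℂ) : ℂ :=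
  if 0 ≤ l ∧ l ≤ N then
    ∑ k ∈ Finset.range (l.toNat + 1),
      (qPoch (q ^ (-l)) q k * qPoch x q k
        / (qPoch (t * q) q k * qPoch (q ^ (-N)) q k * qPoch q q k)) * q ^ k
  else 0

set_option maxHeartbeats 1600000

namespace QKrawAux

/-- `P Q e n = ∏_{j<n} (1 - Q^(e+j))`. -/
def P (Q : ℂ) (e : ℤ) (n : ℕ) : ℂ := ∏ j ∈ Finset.range n, (1 - Q ^ (e + (j:ℤ)))

variable {Q : ℂ}

@[simp] lemma P_zero (e : ℤ) : P Q e 0 = 1 := by simp [P]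

lemma P_succ (e : ℤ) (n : ℕ) : P Q e (n+1) = P Q e n * (1 - Q ^ (e + (n:ℤ))) :=
  prod_range_succ _ _

lemma P_succ' (e : ℤ) (n : ℕ) : P Q e (n+1) = (1 - Q ^ e) * P Q (e+1) n := by
  rw [P, prod_range_succ']
  rw [mul_comm]
  congr 1
  · norm_num
  · refine prod_congr rfl fun j _ => ?_
    congr 1
    push_cast
    ring

lemma P_add (e : ℤ) (m n : ℕ) : P Q e (m+n) = P Q e m * P Q (e+(m:ℤ)) n := by
  rw [P, prod_range_add]
  congr 1
  refine prod_congr rfl fun j _ => ?_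
  congr 1
  push_cast
  ring

lemma P_shift (e : ℤ) (m : ℕ) :
    (1 - Q^e) * P Q (e+1) m = P Q e m * (1 - Q^(e+(m:ℤ))) := by
  rw [← P_succ', P_succ]

lemma P_eq_zero (e : ℤ) (n : ℕ) (h0 : e ≤ 0) (h1 : -e < n) : P Q e n = 0 := by
  refine prod_eq_zero (i := (-e).toNat) ?_ ?_
  · simp only [mem_range]; omega
  · have : e + ((-e).toNat : ℤ) = 0 := by omega
    rw [this, zpow_zero, sub_self]

lemma P_ne_zero (hQ1 : ∀ e : ℤ, e ≠ 0 → (1:ℂ) - Q^e ≠ 0) (e : ℤ) (n : ℕ)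
    (h : ∀ j : ℕ, j < n → e + (j:ℤ) ≠ 0) : P Q e n ≠ 0 := by
  rw [P, prod_ne_zero_iff]
  exact fun j hj => hQ1 _ (h j (mem_range.mp hj))

lemma qPoch_zpow (hQ0 : Q ≠ 0) (e : ℤ) (n : ℕ) : qPoch (Q^e) Q n = P Q e n := by
  refine prod_congr rfl fun j _ => ?_
  rw [← zpow_natCast Q j, ← zpow_add₀ hQ0]

lemma qPoch_self (hQ0 : Q ≠ 0) (n : ℕ) : qPoch Q Q n = P Q 1 n := by
  have := qPoch_zpow hQ0 1 n
  rwa [zpow_one] at this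

lemma step_id (hQ : Q ≠ 0) (α β : ℤ) :
    (1 - Q^α) * Q^β * (1 - Q^(1 - α - β)) = Q * (1 - Q^(β + α - 1)) * (1 - Q^(-α)) := by
  have hA : Q ^ α ≠ 0 := zpow_ne_zero _ hQ
  have hB : Q ^ β ≠ 0 := zpow_ne_zero _ hQ
  have e1 : Q^(1-α-β) = Q * (Q^α)⁻¹ * (Q^β)⁻¹ := by
    rw [zpow_sub₀ hQ, zpow_sub₀ hQ, zpow_one]; ring
  have e2 : Q^(β+α-1) = Q^β * Q^α * Q⁻¹ := by
    rw [zpow_sub₀ hQ, zpow_add₀ hQ, zpow_one, div_eq_mul_inv]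
  have e3 : Q^(-α) = (Q^α)⁻¹ := by rw [zpow_neg]
  rw [e1, e2, e3]
  field_simp
  ring

lemma pair_id (hQ : Q ≠ 0) (a β : ℤ) :
    Q^(-a) * ((1 - Q^(a-β)) * (1 - Q^β)) = (1 - Q^(-β)) * (1 - Q^(β-a)) := by
  have hA : Q ^ a ≠ 0 := zpow_ne_zero _ hQ
  have hB : Q ^ β ≠ 0 := zpow_ne_zero _ hQ
  rw [zpow_neg, zpow_neg, zpow_sub₀ hQ, zpow_sub₀ hQ]
  field_simp
  ring

lemma vand (hQ0 : Q ≠ 0) (hQ1 : ∀ e : ℤ, e ≠ 0 → (1:ℂ) - Q^e ≠ 0) :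
    ∀ n : ℕ, ∀ b c : ℤ, (∀ k : ℕ, k < n + 1 → c + (k:ℤ) ≠ 0) →
    ∑ k ∈ range (n+1), P Q (-(n:ℤ)) k * P Q b k * Q^(k:ℤ) / (P Q c k * P Q 1 k)
      = Q^(b*(n:ℤ)) * P Q (c-b) n / P Q c n := by
  intro n
  induction n with
  | zero => intro b c _; simp
  | succ n IH =>
    intro b c hc
    rw [show ((n+1:ℕ):ℤ) = (n:ℤ)+1 from by push_cast; ring]
    have hcee : ∀ k : ℕ, k < n + 1 → c + 1 + (k:ℤ) ≠ 0 := by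
      intro k hk
      have := hc (k+1) (by omega)
      push_cast at this ⊢
      omega
    have hc0 : (1:ℂ) - Q^c ≠ 0 := hQ1 c (by simpa using hc 0 (by omega))
    have hcn : (1:ℂ) - Q^(c+(n:ℤ)) ≠ 0 := hQ1 _ (hc n (by omega))
    have hPc : P Q c n ≠ 0 := P_ne_zero hQ1 c n (fun j hj => hc j (by omega))
    have hPc1 : P Q (c+1) n ≠ 0 := P_ne_zero hQ1 _ n (fun j hj => hcee j (by omega))
    have hsplit : ∀ k : ℕ, P Q (-((n:ℤ)+1)) k
        = P Q (-(n:ℤ)) k - Q^(-(n:ℤ)-1) * (1 - Q^(k:ℤ)) * P Q (-(n:ℤ)) (k-1) := by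
      intro k
      cases k with
      | zero => simp
      | succ j =>
        have h1 : P Q (-((n:ℤ)+1)) (j+1) = (1 - Q^(-(n:ℤ)-1)) * P Q (-(n:ℤ)) j := by
          rw [show -((n:ℤ)+1) = -(n:ℤ)-1 by ring, P_succ',
            show (-(n:ℤ)-1+1) = -(n:ℤ) by ring]
        have h2 : P Q (-(n:ℤ)) (j+1) = P Q (-(n:ℤ)) j * (1 - Q^(-(n:ℤ)+(j:ℤ))) :=
          P_succ _ _
        have e1 : Q^(-(n:ℤ)-1) * Q^((j:ℤ)+1) = Q^(-(n:ℤ)+(j:ℤ)) := by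
          rw [← zpow_add₀ hQ0]; ring_nf
        have e2 : Q^(((j+1:ℕ)):ℤ) = Q^((j:ℤ)+1) := by push_cast; ring_nf
        rw [h1, h2, Nat.add_sub_cancel, e2]
        linear_combination (-(P Q (-(n:ℤ)) j)) * e1
    calc ∑ k ∈ range (n+1+1), P Q (-((n:ℤ)+1)) k * P Q b k * Q^(k:ℤ) / (P Q c k * P Q 1 k)
        = ∑ k ∈ range (n+1+1),
            (P Q (-(n:ℤ)) k * P Q b k * Q^(k:ℤ) / (P Q c k * P Q 1 k)
             - Q^(-(n:ℤ)-1) * (1 - Q^(k:ℤ)) * P Q (-(n:ℤ)) (k-1) * P Q b k * Q^(k:ℤ)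
                / (P Q c k * P Q 1 k)) := by
          refine sum_congr rfl fun k _ => ?_
          rw [hsplit k]
          ring
      _ = (∑ k ∈ range (n+1+1), P Q (-(n:ℤ)) k * P Q b k * Q^(k:ℤ) / (P Q c k * P Q 1 k))
          - ∑ k ∈ range (n+1+1), Q^(-(n:ℤ)-1) * (1 - Q^(k:ℤ)) * P Q (-(n:ℤ)) (k-1)
              * P Q b k * Q^(k:ℤ) / (P Q c k * P Q 1 k) := by
          rw [sum_sub_distrib]
      _ = Q^(b*(n:ℤ)) * P Q (c-b) n / P Q c n
          - (Q^(-(n:ℤ)) * (1-Q^b) / (1-Q^c))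
            * (Q^((b+1)*(n:ℤ)) * P Q (c+1-(b+1)) n / P Q (c+1) n) := by
          congr 1
          · rw [sum_range_succ, P_eq_zero (-(n:ℤ)) (n+1) (by omega) (by omega)]
            simp only [zero_mul, mul_zero, zero_div, add_zero]
            exact IH b c (fun k hk => hc k (by omega))
          · rw [sum_range_succ']
            simp only [Nat.cast_zero, zpow_zero, sub_self, mul_zero, zero_mul, zero_div, add_zero]
            have hterm : ∀ i ∈ range (n+1),
                Q^(-(n:ℤ)-1) * (1 - Q^(((i+1:ℕ)):ℤ)) * P Q (-(n:ℤ)) (i+1-1)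
                  * P Q b (i+1) * Q^(((i+1:ℕ)):ℤ) / (P Q c (i+1) * P Q 1 (i+1))
                = (Q^(-(n:ℤ)) * (1-Q^b) / (1-Q^c))
                  * (P Q (-(n:ℤ)) i * P Q (b+1) i * Q^(i:ℤ) / (P Q (c+1) i * P Q 1 i)) := by
              intro i hi
              have hiP1 : P Q (c+1) i ≠ 0 := by
                refine P_ne_zero hQ1 _ i (fun j hj => ?_)
                have hin : i < n + 1 := mem_range.mp hi
                exact hcee j (by omega)
              have hiP2 : P Q 1 i ≠ 0 :=
                P_ne_zero hQ1 1 i (fun j hj => by omega)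
              rw [Nat.add_sub_cancel, P_succ' b i, P_succ' c i, P_succ 1 i]
              have hcast : (((i+1:ℕ)):ℤ) = (i:ℤ)+1 := by push_cast; ring
              rw [hcast]
              have hz : Q^((i:ℤ)+1) = Q^(i:ℤ) * Q := by
                rw [zpow_add₀ hQ0, zpow_one]
              have hz2 : Q^(-(n:ℤ)) = Q^(-(n:ℤ)-1) * Q := by
                rw [← zpow_add_one₀ hQ0]; congr 1; ring
              rw [show (1:ℂ) - Q^(1+(i:ℤ)) = 1 - Q^((i:ℤ)+1) from by rw [add_comm],
                hz, hz2]
              have hi2 : (1:ℂ) - Q^(i:ℤ)*Q ≠ 0 := by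
                rw [← hz]; exact hQ1 _ (by omega)
              rw [div_mul_div_comm, div_eq_div_iff
                (mul_ne_zero (mul_ne_zero hc0 hiP1) (mul_ne_zero hiP2 hi2))
                (mul_ne_zero hc0 (mul_ne_zero hiP1 hiP2))]
              ring
            rw [sum_congr rfl hterm, ← mul_sum, IH (b+1) (c+1) hcee]
      _ = Q^(b*((n:ℤ)+1)) * P Q (c-b) (n+1) / P Q c (n+1) := by
          have h1 : P Q c (n+1) = P Q c n * (1 - Q^(c+(n:ℤ))) := P_succ _ _
          have h2 : P Q (c-b) (n+1) = P Q (c-b) n * (1 - Q^(c-b+(n:ℤ))) := P_succ _ _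
          have hsimp : c + 1 - (b+1) = c - b := by ring
          have hb1 : Q^((b+1)*(n:ℤ)) = Q^(b*(n:ℤ)) * Q^(n:ℤ) := by
            rw [← zpow_add₀ hQ0]; ring_nf
          have hb2 : Q^(b*((n:ℤ)+1)) = Q^(b*(n:ℤ)) * Q^b := by
            rw [← zpow_add₀ hQ0]; congr 1; ring
          have eA : Q^(c+(n:ℤ)) = Q^c * Q^(n:ℤ) := by rw [← zpow_add₀ hQ0]
          have eB : Q^(c-b+(n:ℤ)) = Q^c * Q^(n:ℤ) / Q^b := by
            rw [← zpow_add₀ hQ0, ← zpow_sub₀ hQ0]; congr 1; ring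
          have eC : Q^(-(n:ℤ)) = (Q^(n:ℤ))⁻¹ := by rw [zpow_neg]
          have h4 : Q^b ≠ 0 := zpow_ne_zero _ hQ0
          have h6 : Q^(n:ℤ) ≠ 0 := zpow_ne_zero _ hQ0
          have hwv : (1:ℂ) - Q^c * Q^(n:ℤ) ≠ 0 := by rw [← eA]; exact hcn
          have hden : (1 - Q^c) * P Q (c+1) n = P Q c n * (1 - Q^c * Q^(n:ℤ)) := by
            have h := P_shift (Q := Q) c n; rwa [eA] at h
          rw [hsimp, h1, h2, hb1, hb2, eA, eB, eC]
          have h2' : (Q^(n:ℤ))⁻¹ * (1-Q^b)/(1-Q^c)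
                * (Q^(b*(n:ℤ)) * Q^(n:ℤ) * P Q (c-b) n / P Q (c+1) n)
              = (1-Q^b) * (Q^(b*(n:ℤ)) * P Q (c-b) n) / ((1-Q^c) * P Q (c+1) n) := by
            field_simp
          rw [h2', hden]
          rw [div_sub_div _ _ hPc (mul_ne_zero hPc hwv),
            div_eq_div_iff (mul_ne_zero hPc (mul_ne_zero hPc hwv)) (mul_ne_zero hPc hwv)]
          field_simp
          ring

lemma TID (hQ0 : Q ≠ 0) (hQ1 : ∀ e : ℤ, e ≠ 0 → (1:ℂ) - Q^e ≠ 0)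
    (N : ℕ) (a : ℤ) (l m : ℕ) (hm : m ≤ l) (hla : (l:ℤ) + a ≤ (N:ℤ)) :
    ∀ k : ℕ, k ≤ l →
    qPochDec Q (l:ℤ) k * Q^((a - (N:ℤ)) * (k:ℤ)) * P Q (-a) k * P Q (a - (N:ℤ)) (l - k)
      * P Q ((k:ℤ) - (l:ℤ)) m * P Q ((N:ℤ) + 1 - a - (l:ℤ)) k
    = P Q (a - (N:ℤ)) l * P Q (-(l:ℤ)) m * P Q (-((l - m : ℕ):ℤ)) k * P Q (-a) k
        * Q^(k:ℤ) := by
  have hle : ∀ k : ℕ, k ≤ l - m →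
      qPochDec Q (l:ℤ) k * Q^((a - (N:ℤ)) * (k:ℤ)) * P Q (-a) k * P Q (a - (N:ℤ)) (l - k)
        * P Q ((k:ℤ) - (l:ℤ)) m * P Q ((N:ℤ) + 1 - a - (l:ℤ)) k
      = P Q (a - (N:ℤ)) l * P Q (-(l:ℤ)) m * P Q (-((l - m : ℕ):ℤ)) k * P Q (-a) k
          * Q^(k:ℤ) := by
    intro k
    induction k with
    | zero =>
      intro _
      simp [qPochDec]
    | succ k IH =>
      intro hk1
      have IH' := IH (by omega)
      have hD : qPochDec Q (l:ℤ) (k+1) = qPochDec Q (l:ℤ) k * (1 - Q^((l:ℤ) - (k:ℤ))) :=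
        prod_range_succ _ _
      have hz1 : Q^((a-(N:ℤ)) * ((k+1:ℕ):ℤ)) = Q^((a-(N:ℤ))*(k:ℤ)) * Q^(a-(N:ℤ)) := by
        rw [← zpow_add₀ hQ0]; congr 1; push_cast; ring
      have hPa : P Q (-a) (k+1) = P Q (-a) k * (1 - Q^(-a+(k:ℤ))) := P_succ _ _
      have hPs : P Q (-((l-m:ℕ):ℤ)) (k+1)
          = P Q (-((l-m:ℕ):ℤ)) k * (1 - Q^(-((l-m:ℕ):ℤ)+(k:ℤ))) := P_succ _ _
      have hPn : P Q ((N:ℤ)+1-a-(l:ℤ)) (k+1)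
          = P Q ((N:ℤ)+1-a-(l:ℤ)) k * (1 - Q^((N:ℤ)+1-a-(l:ℤ)+(k:ℤ))) := P_succ _ _
      have hz2 : Q^(((k+1:ℕ)):ℤ) = Q^((k:ℤ)) * Q := by
        rw [show (((k+1:ℕ)):ℤ) = (k:ℤ)+1 from by push_cast; ring, zpow_add_one₀ hQ0]
      have hX : P Q (a-(N:ℤ)) (l-k)
          = P Q (a-(N:ℤ)) (l-(k+1)) * (1 - Q^(a-(N:ℤ)+(l:ℤ)-(k:ℤ)-1)) := by
        rw [show l - k = (l - (k+1)) + 1 from by omega, P_succ,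
          show a - (N:ℤ) + ((l-(k+1):ℕ):ℤ) = a-(N:ℤ)+(l:ℤ)-(k:ℤ)-1 from by omega]
      have hY : (1 - Q^((k:ℤ)-(l:ℤ))) * P Q (((k+1:ℕ):ℤ) - (l:ℤ)) m
          = P Q ((k:ℤ)-(l:ℤ)) m * (1 - Q^(-((l-m:ℕ):ℤ)+(k:ℤ))) := by
        rw [show ((k+1:ℕ):ℤ) - (l:ℤ) = ((k:ℤ)-(l:ℤ))+1 from by push_cast; ring]
        rw [show -((l-m:ℕ):ℤ)+(k:ℤ) = (k:ℤ)-(l:ℤ)+(m:ℤ) from by omega]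
        exact P_shift _ _
      have K := step_id hQ0 ((l:ℤ)-(k:ℤ)) (a-(N:ℤ))
      rw [show (1:ℤ)-((l:ℤ)-(k:ℤ))-(a-(N:ℤ)) = (N:ℤ)+1-a-(l:ℤ)+(k:ℤ) from by ring,
        show (a-(N:ℤ))+((l:ℤ)-(k:ℤ))-1 = a-(N:ℤ)+(l:ℤ)-(k:ℤ)-1 from by ring,
        show -((l:ℤ)-(k:ℤ)) = (k:ℤ)-(l:ℤ) from by ring] at K
      have hu : (1:ℂ) - Q^((k:ℤ)-(l:ℤ)) ≠ 0 := hQ1 _ (by omega)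
      have hv : (1:ℂ) - Q^(a-(N:ℤ)+(l:ℤ)-(k:ℤ)-1) ≠ 0 := hQ1 _ (by omega)
      rw [hD, hz1, hPa, hPs, hPn, hz2]
      apply mul_right_cancel₀ (b := (1 - Q^((k:ℤ)-(l:ℤ))) * (1 - Q^(a-(N:ℤ)+(l:ℤ)-(k:ℤ)-1)))
        (mul_ne_zero hu hv)
      calc _
          = (qPochDec Q (l:ℤ) k * Q^((a-(N:ℤ))*(k:ℤ)) * P Q (-a) k
              * (P Q (a-(N:ℤ)) (l-(k+1)) * (1 - Q^(a-(N:ℤ)+(l:ℤ)-(k:ℤ)-1)))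
              * ((1 - Q^((k:ℤ)-(l:ℤ))) * P Q (((k+1:ℕ):ℤ) - (l:ℤ)) m)
              * P Q ((N:ℤ)+1-a-(l:ℤ)) k)
            * ((1 - Q^(-a+(k:ℤ)))
               * ((1 - Q^((l:ℤ) - (k:ℤ))) * Q^(a-(N:ℤ)) * (1 - Q^((N:ℤ)+1-a-(l:ℤ)+(k:ℤ))))) := by
            ring
        _ = (qPochDec Q (l:ℤ) k * Q^((a-(N:ℤ))*(k:ℤ)) * P Q (-a) k
              * P Q (a-(N:ℤ)) (l-k)
              * (P Q ((k:ℤ)-(l:ℤ)) m * (1 - Q^(-((l-m:ℕ):ℤ)+(k:ℤ))))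
              * P Q ((N:ℤ)+1-a-(l:ℤ)) k)
            * ((1 - Q^(-a+(k:ℤ)))
               * ((1 - Q^((l:ℤ) - (k:ℤ))) * Q^(a-(N:ℤ)) * (1 - Q^((N:ℤ)+1-a-(l:ℤ)+(k:ℤ))))) := by
            rw [← hX, hY]
        _ = (qPochDec Q (l:ℤ) k * Q^((a-(N:ℤ))*(k:ℤ)) * P Q (-a) k * P Q (a-(N:ℤ)) (l-k)
              * P Q ((k:ℤ)-(l:ℤ)) m * P Q ((N:ℤ)+1-a-(l:ℤ)) k)
            * ((1 - Q^(-((l-m:ℕ):ℤ)+(k:ℤ))) * (1 - Q^(-a+(k:ℤ)))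
               * ((1 - Q^((l:ℤ) - (k:ℤ))) * Q^(a-(N:ℤ)) * (1 - Q^((N:ℤ)+1-a-(l:ℤ)+(k:ℤ))))) := by
            ring
        _ = (P Q (a-(N:ℤ)) l * P Q (-(l:ℤ)) m * P Q (-((l-m:ℕ):ℤ)) k * P Q (-a) k * Q^(k:ℤ))
            * ((1 - Q^(-((l-m:ℕ):ℤ)+(k:ℤ))) * (1 - Q^(-a+(k:ℤ)))
               * ((1 - Q^((l:ℤ) - (k:ℤ))) * Q^(a-(N:ℤ)) * (1 - Q^((N:ℤ)+1-a-(l:ℤ)+(k:ℤ))))) := by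
            rw [IH']
        _ = (P Q (a-(N:ℤ)) l * P Q (-(l:ℤ)) m * P Q (-((l-m:ℕ):ℤ)) k * P Q (-a) k * Q^(k:ℤ))
            * ((1 - Q^(-((l-m:ℕ):ℤ)+(k:ℤ))) * (1 - Q^(-a+(k:ℤ)))
               * (Q * (1 - Q^(a-(N:ℤ)+(l:ℤ)-(k:ℤ)-1)) * (1 - Q^((k:ℤ)-(l:ℤ))))) := by
            rw [K]
        _ = P Q (a-(N:ℤ)) l * P Q (-(l:ℤ)) m
            * (P Q (-((l-m:ℕ):ℤ)) k * (1 - Q^(-((l-m:ℕ):ℤ)+(k:ℤ))))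
            * (P Q (-a) k * (1 - Q^(-a+(k:ℤ)))) * (Q^(k:ℤ) * Q)
            * ((1 - Q^((k:ℤ)-(l:ℤ))) * (1 - Q^(a-(N:ℤ)+(l:ℤ)-(k:ℤ)-1))) := by
            ring
  intro k hk
  by_cases hks : k ≤ l - m
  · exact hle k hks
  · rw [P_eq_zero ((k:ℤ)-(l:ℤ)) m (by omega) (by omega),
      P_eq_zero (-((l-m:ℕ):ℤ)) k (by omega) (by omega)]
    ring

lemma kid (hQ0 : Q ≠ 0) (N : ℕ) (a : ℤ) (l m : ℕ) (hm : m ≤ l) :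
    Q^((-a)*((l-m:ℕ):ℤ)) * P Q (a-(N:ℤ)+(m:ℤ)) (l-m) * P Q ((N:ℤ)+1-(l:ℤ)) (l-m)
      = P Q ((m:ℤ)-(N:ℤ)) (l-m) * P Q ((N:ℤ)+1-a-(l:ℤ)) (l-m) := by
  have hs : P Q (a-(N:ℤ)+(m:ℤ)) (l-m)
      = ∏ j ∈ range (l-m), (1 - Q^(a - ((N:ℤ)+1-(l:ℤ)+(j:ℤ)))) := by
    rw [P, ← prod_range_reflect]
    refine prod_congr rfl fun j hj => ?_
    have hj' := mem_range.mp hj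
    congr 2
    omega
  have hr : P Q ((m:ℤ)-(N:ℤ)) (l-m)
      = ∏ j ∈ range (l-m), (1 - Q^(-((N:ℤ)+1-(l:ℤ)+(j:ℤ)))) := by
    rw [P, ← prod_range_reflect]
    refine prod_congr rfl fun j hj => ?_
    have hj' := mem_range.mp hj
    congr 2
    omega
  have hz : Q^((-a)*((l-m:ℕ):ℤ)) = ∏ _j ∈ range (l-m), Q^(-a) := by
    rw [prod_const, card_range, zpow_mul, zpow_natCast]
  rw [hz, hs, hr]
  rw [P, P, ← prod_mul_distrib, ← prod_mul_distrib, ← prod_mul_distrib]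
  refine prod_congr rfl fun j hj => ?_
  have hp := pair_id hQ0 a ((N:ℤ)+1-(l:ℤ)+(j:ℤ))
  rw [show (N:ℤ)+1-a-(l:ℤ)+(j:ℤ) = ((N:ℤ)+1-(l:ℤ)+(j:ℤ)) - a from by ring]
  linear_combination hp


lemma Emain (hQ0 : Q ≠ 0) (hQ1 : ∀ e : ℤ, e ≠ 0 → (1:ℂ) - Q^e ≠ 0)
    (N : ℕ) (a : ℤ) (l m : ℕ) (hm : m ≤ l) (hlN : (l:ℤ) ≤ (N:ℤ))
    (hla : (l:ℤ) + a ≤ (N:ℤ)) :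
    ∑ k ∈ range (l+1),
      (qPochDec Q (l:ℤ) k / P Q 1 k) * Q^((a-(N:ℤ))*(k:ℤ)) * (P Q (-a) k / P Q (-(N:ℤ)) l)
        * P Q (a-(N:ℤ)) (l-k) * (P Q ((k:ℤ)-(l:ℤ)) m / P Q (a-(N:ℤ)) m)
      = P Q (-(l:ℤ)) m / P Q (-(N:ℤ)) m := by
  have hP1 : ∀ k : ℕ, P Q 1 k ≠ 0 :=
    fun k => P_ne_zero hQ1 _ _ (fun j hj => by omega)
  have hPNm : P Q (-(N:ℤ)) m ≠ 0 :=
    P_ne_zero hQ1 _ _ (fun j hj => by omega)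
  have hPaNm : P Q (a-(N:ℤ)) m ≠ 0 :=
    P_ne_zero hQ1 _ _ (fun j hj => by omega)
  have hPn : ∀ k : ℕ, P Q ((N:ℤ)+1-a-(l:ℤ)) k ≠ 0 :=
    fun k => P_ne_zero hQ1 _ _ (fun j hj => by omega)
  have hPms : P Q ((m:ℤ)-(N:ℤ)) (l-m) ≠ 0 :=
    P_ne_zero hQ1 _ _ (fun j hj => by omega)
  have hsp1 : P Q (a-(N:ℤ)) l = P Q (a-(N:ℤ)) m * P Q (a-(N:ℤ)+(m:ℤ)) (l-m) := by
    rw [show l = m + (l-m) from by omega, P_add]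
    rw [show m + (l-m) - m = l - m from by omega]
  have hsp2 : P Q (-(N:ℤ)) l = P Q (-(N:ℤ)) m * P Q ((m:ℤ)-(N:ℤ)) (l-m) := by
    rw [show l = m + (l-m) from by omega, P_add,
      show -(N:ℤ)+(m:ℤ) = (m:ℤ)-(N:ℤ) from by ring]
    rw [show m + (l-m) - m = l - m from by omega]
  have hterm : ∀ k ∈ range (l+1),
      (qPochDec Q (l:ℤ) k / P Q 1 k) * Q^((a-(N:ℤ))*(k:ℤ)) * (P Q (-a) k / P Q (-(N:ℤ)) l)
        * P Q (a-(N:ℤ)) (l-k) * (P Q ((k:ℤ)-(l:ℤ)) m / P Q (a-(N:ℤ)) m)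
      = ((P Q (-(l:ℤ)) m / P Q (-(N:ℤ)) m)
          * (P Q (a-(N:ℤ)+(m:ℤ)) (l-m) / P Q ((m:ℤ)-(N:ℤ)) (l-m)))
        * (P Q (-((l-m:ℕ):ℤ)) k * P Q (-a) k * Q^(k:ℤ)
            / (P Q ((N:ℤ)+1-a-(l:ℤ)) k * P Q 1 k)) := by
    intro k hk
    have hk' : k ≤ l := by simpa [Nat.lt_succ_iff] using mem_range.mp hk
    have tid := TID hQ0 hQ1 N a l m hm hla k hk'
    rw [hsp1] at tid
    have d1 : P Q 1 k * (P Q (-(N:ℤ)) m * P Q ((m:ℤ)-(N:ℤ)) (l-m)) * P Q (a-(N:ℤ)) m ≠ 0 :=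
      mul_ne_zero (mul_ne_zero (hP1 k) (mul_ne_zero hPNm hPms)) hPaNm
    have d2 : (P Q (-(N:ℤ)) m * P Q ((m:ℤ)-(N:ℤ)) (l-m))
        * (P Q ((N:ℤ)+1-a-(l:ℤ)) k * P Q 1 k) ≠ 0 :=
      mul_ne_zero (mul_ne_zero hPNm hPms) (mul_ne_zero (hPn k) (hP1 k))
    rw [hsp2]
    calc (qPochDec Q (l:ℤ) k / P Q 1 k) * Q^((a-(N:ℤ))*(k:ℤ))
          * (P Q (-a) k / (P Q (-(N:ℤ)) m * P Q ((m:ℤ)-(N:ℤ)) (l-m)))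
          * P Q (a-(N:ℤ)) (l-k) * (P Q ((k:ℤ)-(l:ℤ)) m / P Q (a-(N:ℤ)) m)
        = (qPochDec Q (l:ℤ) k * Q^((a-(N:ℤ))*(k:ℤ)) * P Q (-a) k * P Q (a-(N:ℤ)) (l-k)
            * P Q ((k:ℤ)-(l:ℤ)) m)
          / (P Q 1 k * (P Q (-(N:ℤ)) m * P Q ((m:ℤ)-(N:ℤ)) (l-m)) * P Q (a-(N:ℤ)) m) := by
          ring
      _ = (P Q (-(l:ℤ)) m * P Q (a-(N:ℤ)+(m:ℤ)) (l-m) * P Q (-((l-m:ℕ):ℤ)) k * P Q (-a) k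
            * Q^(k:ℤ))
          / ((P Q (-(N:ℤ)) m * P Q ((m:ℤ)-(N:ℤ)) (l-m))
             * (P Q ((N:ℤ)+1-a-(l:ℤ)) k * P Q 1 k)) := by
          rw [div_eq_div_iff d1 d2]
          linear_combination (P Q (-(N:ℤ)) m * P Q ((m:ℤ)-(N:ℤ)) (l-m) * P Q 1 k) * tid
      _ = ((P Q (-(l:ℤ)) m / P Q (-(N:ℤ)) m)
            * (P Q (a-(N:ℤ)+(m:ℤ)) (l-m) / P Q ((m:ℤ)-(N:ℤ)) (l-m)))
          * (P Q (-((l-m:ℕ):ℤ)) k * P Q (-a) k * Q^(k:ℤ)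
              / (P Q ((N:ℤ)+1-a-(l:ℤ)) k * P Q 1 k)) := by
          ring
  rw [sum_congr rfl hterm, ← mul_sum]
  have hsub : ∑ k ∈ range (l+1),
      P Q (-((l-m:ℕ):ℤ)) k * P Q (-a) k * Q^(k:ℤ)
        / (P Q ((N:ℤ)+1-a-(l:ℤ)) k * P Q 1 k)
      = ∑ k ∈ range ((l-m)+1),
      P Q (-((l-m:ℕ):ℤ)) k * P Q (-a) k * Q^(k:ℤ)
        / (P Q ((N:ℤ)+1-a-(l:ℤ)) k * P Q 1 k) := by
    symm
    refine sum_subset ?_ ?_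
    · intro x hx
      simp only [mem_range] at hx ⊢
      omega
    · intro x _ hx
      simp only [mem_range] at hx
      rw [P_eq_zero (-((l-m:ℕ):ℤ)) x (by omega) (by omega)]
      simp
  rw [hsub, vand hQ0 hQ1 (l-m) (-a) ((N:ℤ)+1-a-(l:ℤ)) (fun k hk => by omega),
    show (N:ℤ)+1-a-(l:ℤ)-(-a) = (N:ℤ)+1-(l:ℤ) from by ring]
  have hone : (P Q (a-(N:ℤ)+(m:ℤ)) (l-m) / P Q ((m:ℤ)-(N:ℤ)) (l-m))
      * (Q^((-a)*((l-m:ℕ):ℤ)) * P Q ((N:ℤ)+1-(l:ℤ)) (l-m)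
          / P Q ((N:ℤ)+1-a-(l:ℤ)) (l-m)) = 1 := by
    rw [div_mul_div_comm, div_eq_one_iff_eq (mul_ne_zero hPms (hPn (l-m)))]
    linear_combination kid hQ0 N a l m hm
  calc P Q (-(l:ℤ)) m / P Q (-(N:ℤ)) m * (P Q (a-(N:ℤ)+(m:ℤ)) (l-m) / P Q ((m:ℤ)-(N:ℤ)) (l-m))
        * (Q^((-a)*((l-m:ℕ):ℤ)) * P Q ((N:ℤ)+1-(l:ℤ)) (l-m) / P Q ((N:ℤ)+1-a-(l:ℤ)) (l-m))
      = P Q (-(l:ℤ)) m / P Q (-(N:ℤ)) m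
        * ((P Q (a-(N:ℤ)+(m:ℤ)) (l-m) / P Q ((m:ℤ)-(N:ℤ)) (l-m))
          * (Q^((-a)*((l-m:ℕ):ℤ)) * P Q ((N:ℤ)+1-(l:ℤ)) (l-m)
              / P Q ((N:ℤ)+1-a-(l:ℤ)) (l-m))) := by ring
    _ = P Q (-(l:ℤ)) m / P Q (-(N:ℤ)) m := by rw [hone, mul_one]


end QKrawAux

open QKrawAux

/-- **Proposition 7.2**: connection formula between affine q-Krawtchouk polynomials
with parameters `N` and `N - a`. -/
theorem connection_formula_affine_qKrawtchouk
    (q t : ℝ) (hq0 : 0 < q) (hq1 : q < 1) (ht0 : 0 < t * q) (ht1 : t * q < 1)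
    (N : ℕ) (a : ℤ) (ha : a ≤ (N:ℤ)) (l : ℕ)
    (hl : (l:ℤ) ≤ min (N:ℤ) ((N:ℤ) - a)) (x : ℂ) :
    qKraw (l:ℤ) x (t:ℂ) (N:ℤ) (q:ℂ)
      = ∑ k ∈ Finset.range (l+1),
          (qPochDec (q:ℂ) (l:ℤ) k / qPoch (q:ℂ) (q:ℂ) k) *
            (q:ℂ) ^ ((a - (N:ℤ)) * (k:ℤ)) *
            (qPoch ((q:ℂ) ^ (-a)) (q:ℂ) k / qPoch ((q:ℂ) ^ (-(N:ℤ))) (q:ℂ) l) *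
            qPoch ((q:ℂ) ^ (a - (N:ℤ))) (q:ℂ) (l - k) *
            qKraw ((l:ℤ) - (k:ℤ)) x (t:ℂ) ((N:ℤ) - a) (q:ℂ) := by
  set Q : ℂ := (q:ℂ) with hQdef
  have hQ0 : Q ≠ 0 := by
    simp only [hQdef, ne_eq, Complex.ofReal_eq_zero]
    exact hq0.ne'
  have hQ1 : ∀ e : ℤ, e ≠ 0 → (1:ℂ) - Q^e ≠ 0 := by
    intro e he
    rw [sub_ne_zero]
    intro h
    have h2 : ((q ^ e : ℝ) : ℂ) = ((1:ℝ):ℂ) := by push_cast [← h]; exact h.symm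
    have h3 : q ^ e = 1 := by exact_mod_cast h2
    have hlog := congrArg Real.log h3
    rw [Real.log_zpow, Real.log_one, mul_eq_zero] at hlog
    rcases hlog with h4 | h4
    · exact he (by exact_mod_cast h4)
    · have := Real.log_neg hq0 hq1
      linarith
  have hlN : (l:ℤ) ≤ (N:ℤ) := le_trans hl (min_le_left _ _)
  have hla : (l:ℤ) + a ≤ (N:ℤ) := by
    have := le_trans hl (min_le_right _ _)
    omega
  have hRHS : ∀ k ∈ range (l+1),
      (qPochDec Q (l:ℤ) k / qPoch Q Q k) * Q^((a-(N:ℤ))*(k:ℤ)) *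
        (qPoch (Q^(-a)) Q k / qPoch (Q^(-(N:ℤ))) Q l) * qPoch (Q^(a-(N:ℤ))) Q (l-k) *
        qKraw ((l:ℤ)-(k:ℤ)) x (t:ℂ) ((N:ℤ)-a) Q
      = ∑ m ∈ range (l+1),
          ((qPochDec Q (l:ℤ) k / P Q 1 k) * Q^((a-(N:ℤ))*(k:ℤ))
            * (P Q (-a) k / P Q (-(N:ℤ)) l)
            * P Q (a-(N:ℤ)) (l-k) * (P Q ((k:ℤ)-(l:ℤ)) m / P Q (a-(N:ℤ)) m))
          * (qPoch x Q m * Q^m / (qPoch ((t:ℂ)*Q) Q m * P Q 1 m)) := by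
    intro k hk
    have hk' : k ≤ l := by
      have := mem_range.mp hk
      omega
    rw [qPoch_self hQ0, qPoch_zpow hQ0, qPoch_zpow hQ0, qPoch_zpow hQ0]
    rw [qKraw, if_pos ⟨by omega, by omega⟩,
      show ((l:ℤ)-(k:ℤ)).toNat = l - k from by omega,
      show -((l:ℤ)-(k:ℤ)) = (k:ℤ)-(l:ℤ) from by ring,
      show -((N:ℤ)-a) = a-(N:ℤ) from by ring]
    have hin : ∀ m : ℕ,
        (qPoch (Q^((k:ℤ)-(l:ℤ))) Q m * qPoch x Q m
          / (qPoch ((t:ℂ)*Q) Q m * qPoch (Q^(a-(N:ℤ))) Q m * qPoch Q Q m)) * Q^m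
        = (P Q ((k:ℤ)-(l:ℤ)) m * qPoch x Q m
          / (qPoch ((t:ℂ)*Q) Q m * P Q (a-(N:ℤ)) m * P Q 1 m)) * Q^m := by
      intro m
      rw [qPoch_self hQ0, qPoch_zpow hQ0, qPoch_zpow hQ0]
    rw [sum_congr rfl (fun m _ => hin m)]
    have hext : ∑ m ∈ range (l-k+1),
        (P Q ((k:ℤ)-(l:ℤ)) m * qPoch x Q m
          / (qPoch ((t:ℂ)*Q) Q m * P Q (a-(N:ℤ)) m * P Q 1 m)) * Q^m
        = ∑ m ∈ range (l+1),
        (P Q ((k:ℤ)-(l:ℤ)) m * qPoch x Q m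
          / (qPoch ((t:ℂ)*Q) Q m * P Q (a-(N:ℤ)) m * P Q 1 m)) * Q^m := by
      refine sum_subset ?_ ?_
      · intro y hy
        simp only [mem_range] at hy ⊢
        omega
      · intro y _ hy
        simp only [mem_range] at hy
        rw [P_eq_zero ((k:ℤ)-(l:ℤ)) y (by omega) (by omega)]
        simp
    rw [hext, mul_sum]
    refine sum_congr rfl fun m _ => ?_
    ring
  rw [sum_congr rfl hRHS, Finset.sum_comm]
  rw [qKraw, if_pos ⟨by omega, hlN⟩, show ((l:ℤ)).toNat = l from by omega]
  refine sum_congr rfl fun m hm => ?_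
  have hm' : m ≤ l := by
    have := mem_range.mp hm
    omega
  rw [qPoch_self hQ0, qPoch_zpow hQ0, qPoch_zpow hQ0, ← sum_mul,
    Emain hQ0 hQ1 N a l m hm' hlN hla]
  ring

end
end

section
/- Generating function for affine q-Krawtchouk polynomials (equation (7.2)). Let 0 < q < 1 and let t be real with 0 < tq < 1, N ∈ ℤ₊. Then for every integer x with 0 ≤ x ≤ N and every z ∈ ℂ: (zq^{-N};q)_{N-x} · Σ_{k=0}^{x} [ (q^{-x};q)_k / ((tq;q)_k (q;q)_k) ] (-1)^k q^{k(k-1)/2} (tqz)^k = Σ_{l=0}^{N} [ (q^{-N};q)_l / (q;q)_l ] K_l(q^{-x}; t, N; q) z^l. (The left-hand factor Σ_k is the terminating basic hypergeometric series ₁φ₁(q^{-x}; tq; q, tqz).) -/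
open Finset

noncomputable section

namespace QK

variable (q : ℂ)

lemma qPoch_zero (a : ℂ) : qPoch a q 0 = 1 := by simp [qPoch]

lemma qPoch_succ (a : ℂ) (n : ℕ) : qPoch a q (n+1) = qPoch a q n * (1 - a * q ^ n) :=
  Finset.prod_range_succ _ _

lemma qPoch_add (a : ℂ) (m n : ℕ) :
    qPoch a q (m + n) = qPoch a q m * qPoch (a * q ^ m) q n := by
  rw [qPoch, qPoch, qPoch, Finset.prod_range_add]
  congr 1
  refine Finset.prod_congr rfl fun j _ => ?_
  rw [pow_add]; ring

/-- Gaussian binomial coefficient (as a value in ℂ). -/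
def qb (n k : ℕ) : ℂ :=
  if k ≤ n then qPoch q q n / (qPoch q q k * qPoch q q (n-k)) else 0

lemma qb_eq_zero {n k : ℕ} (h : n < k) : qb q n k = 0 := if_neg (by omega)

lemma qb_def {n k : ℕ} (h : k ≤ n) :
    qb q n k = qPoch q q n / (qPoch q q k * qPoch q q (n-k)) := if_pos h

variable (hp : ∀ n, qPoch q q n ≠ 0)
include hp

lemma qb_zero_right (n : ℕ) : qb q n 0 = 1 := by
  rw [qb_def q (Nat.zero_le n), qPoch_zero]
  simp [div_self (hp n)]

lemma qb_self (n : ℕ) : qb q n n = 1 := by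
  rw [qb_def q le_rfl]
  simp [qPoch_zero, div_self (hp n)]

lemma qb_mul_poch {n k : ℕ} (h : k ≤ n) :
    qb q n k * (qPoch q q k * qPoch q q (n-k)) = qPoch q q n := by
  rw [qb_def q h, div_mul_cancel₀]
  exact mul_ne_zero (hp k) (hp (n-k))

lemma qb_ne_zero {n k : ℕ} (h : k ≤ n) : qb q n k ≠ 0 := by
  rw [qb_def q h]
  exact div_ne_zero (hp n) (mul_ne_zero (hp k) (hp (n-k)))

end QK

namespace N2

lemma choose2_succ (n : ℕ) : (n+1).choose 2 = n.choose 2 + n := by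
  have h := Nat.choose_succ_succ n 1
  simp [Nat.choose_one_right] at h
  omega

lemma choose2_add (k m : ℕ) : (k+m).choose 2 = k.choose 2 + m.choose 2 + k*m := by
  induction m with
  | zero => simp
  | succ m ih =>
    rw [show k+(m+1) = (k+m)+1 from rfl, choose2_succ, ih, choose2_succ]
    ring_nf

lemma two_choose2 (k : ℕ) : 2 * k.choose 2 + k = k * k := by
  induction k with
  | zero => simp
  | succ k ih => rw [choose2_succ]; nlinarith [ih]

lemma choose2_sub {k l : ℕ} (h : k ≤ l) :
    (l-k).choose 2 + k*l = l.choose 2 + k.choose 2 + k := by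
  obtain ⟨d, rfl⟩ : ∃ d, l = d + k := ⟨l - k, by omega⟩
  rw [show d+k-k = d by omega, choose2_add]
  nlinarith [two_choose2 k]

end N2

namespace QK
variable (q : ℂ) (hp : ∀ n, qPoch q q n ≠ 0)
include hp

lemma qb_pascal2 (n k : ℕ) :
    qb q (n+1) (k+1) = q^(n-k) * qb q n k + qb q n (k+1) := by
  rcases lt_or_ge n k with h | h
  · rw [qb_eq_zero q (by omega), qb_eq_zero q h, qb_eq_zero q (by omega)]; ring
  rcases eq_or_lt_of_le h with rfl | h
  · rw [qb_self q hp, qb_eq_zero q (n:=k) (k:=k+1) (by omega), qb_self q hp]; simp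
  · obtain ⟨d, rfl⟩ : ∃ d, n = k + d + 1 := ⟨n - k - 1, by omega⟩
    rw [qb_def q (by omega), qb_def q (by omega), qb_def q (by omega)]
    rw [show k + d + 1 + 1 - (k+1) = d+1 by omega, show k + d + 1 - k = d+1 by omega,
        show k + d + 1 - (k+1) = d by omega]
    rw [show k + d + 1 + 1 = (k+d+1)+1 from rfl, qPoch_succ q q (k+d+1),
        qPoch_succ q q k, qPoch_succ q q d]
    have h1 := hp k; have h2 := hp d; have h3 := hp (k+d+1)
    have h4 : (1 - q * q ^ k) ≠ 0 := by
      have := hp (k+1); rw [qPoch_succ] at this; exact right_ne_zero_of_mul this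
    have h5 : (1 - q * q ^ d) ≠ 0 := by
      have := hp (d+1); rw [qPoch_succ] at this; exact right_ne_zero_of_mul this
    field_simp
    ring
end QK

namespace QK
variable (q : ℂ) (hp : ∀ n, qPoch q q n ≠ 0)
include hp

theorem qbinom (w : ℂ) (n : ℕ) :
    qPoch w q n = ∑ k ∈ range (n+1), (-1)^k * qb q n k * q^(k.choose 2) * w^k := by
  induction n with
  | zero => simp [qPoch_zero, qb_zero_right q hp]
  | succ n ih =>
    rw [qPoch_succ, ih, Finset.sum_range_succ' _ (n+1)]
    have step : ∀ i ∈ range (n+1),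
        (-1)^(i+1) * qb q (n+1) (i+1) * q^((i+1).choose 2) * w^(i+1)
        = (-(q^n * w)) * ((-1)^i * qb q n i * q^(i.choose 2) * w^i)
          + (-1)^(i+1) * qb q n (i+1) * q^((i+1).choose 2) * w^(i+1) := by
      intro i hi
      have hin : i ≤ n := by have := mem_range.mp hi; omega
      rw [qb_pascal2 q hp]
      simp only [N2.choose2_succ]
      have h6 : q^(n-i) * q^(i.choose 2 + i) = q^n * q^(i.choose 2) := by
        rw [← pow_add, ← pow_add]; congr 1; omega
      linear_combination ((-1:ℂ)^(i+1) * qb q n i * w^(i+1)) * h6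
    rw [Finset.sum_congr rfl step, Finset.sum_add_distrib]
    have e2 : ∑ i ∈ range (n+1), (-1)^(i+1) * qb q n (i+1) * q^((i+1).choose 2) * w^(i+1)
        = ∑ i ∈ range n, (-1)^(i+1) * qb q n (i+1) * q^((i+1).choose 2) * w^(i+1) := by
      rw [Finset.sum_range_succ, qb_eq_zero q (n:=n) (k:=n+1) (by omega)]; simp
    rw [e2, ← Finset.mul_sum]
    have e3 : (-1:ℂ)^0 * qb q (n+1) 0 * q^(Nat.choose 0 2) * w^0 = 1 := by
      simp [qb_zero_right q hp]
    rw [e3]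
    have e4 : (∑ i ∈ range n, (-1)^(i+1) * qb q n (i+1) * q^((i+1).choose 2) * w^(i+1)) + 1
        = ∑ k ∈ range (n+1), (-1)^k * qb q n k * q^(k.choose 2) * w^k := by
      rw [Finset.sum_range_succ' (fun k => (-1:ℂ)^k * qb q n k * q^(k.choose 2) * w^k) n]
      simp [qb_zero_right q hp]
    rw [add_assoc, e4]
    ring
end QK

namespace QK
variable (q : ℂ) (hp : ∀ n, qPoch q q n ≠ 0)
include hp

lemma qb_subset {k l n : ℕ} (hkl : k ≤ l) (hln : l ≤ n) :
    qb q n l * qb q l k = qb q n k * qb q (n-k) (l-k) := by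
  rw [qb_def q hln, qb_def q hkl, qb_def q (le_trans hkl hln), qb_def q (by omega),
      show n - k - (l - k) = n - l by omega]
  have h1 := hp n; have h2 := hp l; have h3 := hp k
  have h4 := hp (n-l); have h5 := hp (l-k); have h6 := hp (n-k)
  field_simp

lemma qb_trin (l k m : ℕ) :
    qb q l k * qb q (l-k) m = qb q l m * qb q (l-m) k := by
  by_cases hk : k ≤ l
  · by_cases hm : m ≤ l - k
    · rw [qb_def q hk, qb_def q hm, qb_def q (show m ≤ l by omega), qb_def q (show k ≤ l - m by omega),
          show l - k - m = l - m - k by omega]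
      have h1 := hp l; have h2 := hp k; have h3 := hp m
      have h4 := hp (l-k); have h5 := hp (l-m); have h6 := hp (l-m-k)
      field_simp
    · rw [qb_eq_zero q (show l - k < m by omega)]
      by_cases hm2 : m ≤ l
      · rw [qb_eq_zero q (show l - m < k by omega)]; ring
      · rw [qb_eq_zero q (show l < m by omega)]; ring
  · rw [qb_eq_zero q (show l < k by omega)]
    by_cases hm2 : m ≤ l
    · rw [qb_eq_zero q (show l - m < k by omega)]; ring
    · rw [qb_eq_zero q (show l < m by omega)]; ring

variable (hq0 : q ≠ 0)
include hq0

lemma qPoch_inv (n k : ℕ) :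
    qPoch ((q^n)⁻¹) q k
      = (-1)^k * q^(k.choose 2) * ((q^n)⁻¹)^k * qb q n k * qPoch q q k := by
  have hqn : (q:ℂ)^n ≠ 0 := pow_ne_zero _ hq0
  induction k with
  | zero => simp [qPoch_zero, qb_zero_right q hp]
  | succ k ih =>
    rw [qPoch_succ, ih]
    rcases lt_or_ge k n with h | h
    · obtain ⟨d, rfl⟩ : ∃ d, n = k + d + 1 := ⟨n - k - 1, by omega⟩
      rw [qb_def q (show k ≤ k+d+1 by omega), qb_def q (show k+1 ≤ k+d+1 by omega),
          show k + d + 1 - k = d + 1 by omega, show k + d + 1 - (k+1) = d by omega]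
      simp only [N2.choose2_succ]
      have h1 := hp k; have h2 := hp d; have h3 := hp (k+d+1)
      have h6 := hp (k+1); have h7 := hp (d+1)
      field_simp
      simp only [qPoch_succ]
      have hu : q^k * q⁻¹^k = 1 := by rw [← mul_pow, mul_inv_cancel₀ hq0, one_pow]
      have hv : q^d * q⁻¹^d = 1 := by rw [← mul_pow, mul_inv_cancel₀ hq0, one_pow]
      have hw : q * q⁻¹ = 1 := mul_inv_cancel₀ hq0
      linear_combination (q^(k.choose 2) * q⁻¹^(k*d) * q⁻¹^(k^2) * qPoch q q d * (-1)^k) *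
        (q*q^d - 1) * (-(q^k*q⁻¹^k) * hu - (q^k*q⁻¹^k)^2 * (q*q⁻¹) * hv - (q^k*q⁻¹^k)^2 * hw)
    · rw [qb_eq_zero q (show n < k + 1 by omega)]
      rcases eq_or_lt_of_le h with heq | h2
      · have hz : (1 - (q^n)⁻¹ * q^k) = 0 := by
          rw [heq, inv_mul_cancel₀ (pow_ne_zero _ hq0)]; ring
        rw [hz]; ring
      · rw [qb_eq_zero q (show n < k by omega)]; ring
end QK

namespace QK

lemma sum_triangle (n : ℕ) (f : ℕ → ℕ → ℂ) :
    ∑ l ∈ range n, ∑ k ∈ range (l+1), f l k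
      = ∑ k ∈ range n, ∑ m ∈ range (n-k), f (k+m) k := by
  induction n with
  | zero => simp
  | succ n ih =>
    rw [Finset.sum_range_succ, ih,
        Finset.sum_range_succ (fun k => ∑ m ∈ range (n+1-k), f (k+m) k) n]
    have h1 : ∀ k ∈ range n, (fun k => ∑ m ∈ range (n+1-k), f (k+m) k) k
        = (∑ m ∈ range (n-k), f (k+m) k) + f n k := by
      intro k hk
      have hkn : k < n := mem_range.mp hk
      simp only
      rw [show n+1-k = (n-k)+1 by omega, Finset.sum_range_succ, show k+(n-k) = n by omega]
    rw [Finset.sum_congr rfl h1, Finset.sum_add_distrib]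
    rw [show n+1-n = 1 by omega, Finset.sum_range_one, Finset.sum_range_succ]
    simp [add_assoc]
end QK

namespace QK
variable (q : ℂ) (hp : ∀ n, qPoch q q n ≠ 0) (hq0 : q ≠ 0)
include hp hq0

theorem Vpoly (c : ℂ) (l : ℕ) :
    ∑ k ∈ range (l+1), (-1)^k * qb q l k * q^((l-k).choose 2) * qPoch (c*q^k) q (l-k)
      = (-1)^l * q^(l*l - l) * c^l := by
  have e1 : ∀ k ∈ range (l+1),
      (-1:ℂ)^k * qb q l k * q^((l-k).choose 2) * qPoch (c*q^k) q (l-k)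
      = ∑ m ∈ range (l+1), (-1:ℂ)^k * qb q l k * q^((l-k).choose 2) *
          ((-1)^m * qb q (l-k) m * q^(m.choose 2) * (c*q^k)^m) := by
    intro k hk
    have hkl : k ≤ l := by have := mem_range.mp hk; omega
    rw [qbinom q hp (c*q^k) (l-k), Finset.mul_sum]
    apply Finset.sum_subset
    · exact Finset.range_subset_range.mpr (by omega)
    · intro m hm1 hm2
      rw [qb_eq_zero q (show l - k < m by
        simp only [mem_range] at hm1 hm2; omega)]
      ring
  rw [Finset.sum_congr rfl e1, Finset.sum_comm, Finset.sum_range_succ]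
  have main0 : ∀ m ∈ range l,
      (∑ k ∈ range (l+1), (-1:ℂ)^k * qb q l k * q^((l-k).choose 2) *
          ((-1)^m * qb q (l-k) m * q^(m.choose 2) * (c*q^k)^m)) = 0 := by
    intro m hm
    have hml : m < l := mem_range.mp hm
    set w : ℂ := (q^(l-m-1))⁻¹ with hw
    have key : ∀ k ∈ range (l+1),
        (-1:ℂ)^k * qb q l k * q^((l-k).choose 2) *
          ((-1)^m * qb q (l-k) m * q^(m.choose 2) * (c*q^k)^m)
        = ((-1:ℂ)^m * qb q l m * q^(l.choose 2) * q^(m.choose 2) * c^m) *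
          ((-1)^k * qb q (l-m) k * q^(k.choose 2) * w^k) := by
      intro k hk
      have hkl : k ≤ l := by have := mem_range.mp hk; omega
      have htrin := qb_trin q hp l k m
      have hpowkey : q^((l-k).choose 2) * q^(k*m) = q^(l.choose 2) * q^(k.choose 2) * w^k := by
        rw [hw, inv_pow, ← pow_mul, eq_comm, mul_assoc, mul_comm (q^(k.choose 2)),
            ← div_eq_inv_mul, ← mul_div_assoc, div_eq_iff (pow_ne_zero _ hq0),
            ← pow_add, ← pow_add, ← pow_add]
        congr 1
        have h := N2.choose2_sub hkl
        obtain ⟨e, rfl⟩ : ∃ e, l = m + e + 1 := ⟨l-m-1, by omega⟩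
        simp only [show m+e+1-m-1 = e by omega] at *
        zify at h ⊢
        nlinarith [h]
      calc (-1:ℂ)^k * qb q l k * q^((l-k).choose 2) *
          ((-1)^m * qb q (l-k) m * q^(m.choose 2) * (c*q^k)^m)
          = ((-1:ℂ)^m * q^(m.choose 2) * c^m * (-1)^k) * (qb q l k * qb q (l-k) m) *
              (q^((l-k).choose 2) * q^(k*m)) := by
            rw [mul_pow, ← pow_mul]; ring
        _ = ((-1:ℂ)^m * q^(m.choose 2) * c^m * (-1)^k) * (qb q l m * qb q (l-m) k) *
              (q^(l.choose 2) * q^(k.choose 2) * w^k) := by rw [htrin, hpowkey]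
        _ = _ := by ring
    rw [Finset.sum_congr rfl key, ← Finset.mul_sum]
    have hshrink : ∑ k ∈ range (l+1), (-1:ℂ)^k * qb q (l-m) k * q^(k.choose 2) * w^k
        = ∑ k ∈ range ((l-m)+1), (-1:ℂ)^k * qb q (l-m) k * q^(k.choose 2) * w^k := by
      refine (Finset.sum_subset (Finset.range_subset_range.mpr (by omega)) ?_).symm
      intro k hk1 hk2
      rw [qb_eq_zero q (show l - m < k by
        simp only [mem_range] at hk1 hk2; omega)]
      ring
    rw [hshrink, ← qbinom q hp w (l-m)]
    have : qPoch w q (l-m) = 0 := by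
      rw [qPoch]
      apply Finset.prod_eq_zero (Finset.mem_range.mpr (show l-m-1 < l-m by omega))
      rw [hw, inv_mul_cancel₀ (pow_ne_zero _ hq0)]; ring
    rw [this]; ring
  rw [Finset.sum_eq_zero main0, zero_add]
  have last : ∀ k ∈ range (l+1),
      (-1:ℂ)^k * qb q l k * q^((l-k).choose 2) *
        ((-1)^l * qb q (l-k) l * q^(l.choose 2) * (c*q^k)^l)
      = if k = 0 then (-1:ℂ)^l * q^(l*l-l) * c^l else 0 := by
    intro k hk
    rcases Nat.eq_zero_or_pos k with rfl | hkpos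
    · have hpw : (q:ℂ)^(l.choose 2) * q^(l.choose 2) = q^(l*l-l) := by
        rw [← pow_add]; congr 1
        have := N2.two_choose2 l; omega
      rw [Nat.sub_zero, qb_zero_right q hp, qb_self q hp, if_pos rfl]
      rw [mul_pow]
      simp only [pow_zero, one_pow, mul_one, one_mul]
      linear_combination ((-1:ℂ)^l * c^l) * hpw
    · rw [if_neg (by omega), qb_eq_zero q (show l - k < l by
        have := mem_range.mp hk; omega)]
      ring
  rw [Finset.sum_congr rfl last, Finset.sum_ite_eq' (range (l+1)) 0]
  simp
end QK

namespace QK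
variable (q : ℂ) (hp : ∀ n, qPoch q q n ≠ 0) (hq0 : q ≠ 0)
include hp hq0

theorem Vdiv (c : ℂ) (hc : ∀ n, qPoch c q n ≠ 0) (l : ℕ) :
    ∑ k ∈ range (l+1), (-1:ℂ)^(l-k) * qb q l k * q^((l-k).choose 2) / qPoch c q k
      = q^(l*l-l) * c^l / qPoch c q l := by
  have hV := Vpoly q hp hq0 c l
  have e : ∀ k ∈ range (l+1),
      (-1:ℂ)^k * qb q l k * q^((l-k).choose 2) * qPoch (c*q^k) q (l-k)
      = ((-1:ℂ)^l * qPoch c q l) *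
          ((-1)^(l-k) * qb q l k * q^((l-k).choose 2) / qPoch c q k) := by
    intro k hk
    have hkl : k ≤ l := by simp only [mem_range] at hk; omega
    have hsplit : qPoch c q l = qPoch c q k * qPoch (c*q^k) q (l-k) := by
      rw [← qPoch_add]; congr 1; omega
    have hss : ((-1:ℂ))^l * (-1)^(l-k) = (-1)^k := by
      have h1 : ((-1:ℂ))^(l-k) * (-1)^k = (-1)^l := by rw [← pow_add]; congr 1; omega
      have h3 : ((-1:ℂ))^(l-k) * (-1)^(l-k) = 1 := by
        rw [← pow_add, show (l-k)+(l-k) = 2*(l-k) by ring, pow_mul]; norm_num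
      calc (-1:ℂ)^l * (-1)^(l-k) = ((-1)^(l-k) * (-1)^k) * (-1)^(l-k) := by rw [h1]
        _ = ((-1)^(l-k) * (-1)^(l-k)) * (-1)^k := by ring
        _ = (-1)^k := by rw [h3]; ring
    rw [hsplit]
    have hck := hc k
    field_simp
    linear_combination (qb q l k * qPoch (c*q^k) q (l-k)) * hss.symm
  rw [Finset.sum_congr rfl e, ← Finset.mul_sum] at hV
  have hneg : ((-1:ℂ))^l ≠ 0 := pow_ne_zero _ (by norm_num)
  apply mul_left_cancel₀ (mul_ne_zero hneg (hc l))
  rw [hV]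
  have hcl := hc l
  field_simp

theorem star (c : ℂ) (hc : ∀ n, qPoch c q n ≠ 0) (x : ℕ) (z : ℂ) :
    ∑ k ∈ range (x+1),
        ((q^x)⁻¹)^k * qb q x k / qPoch c q k * z^k * qPoch (z * (q^x)⁻¹) q (x-k)
      = ∑ k ∈ range (x+1),
        q^(k*k-k) * ((q^x)⁻¹)^k * qb q x k * c^k * z^k / qPoch c q k := by
  set Xi : ℂ := (q^x)⁻¹ with hXi
  have e1 : ∀ k ∈ range (x+1),
      Xi^k * qb q x k / qPoch c q k * z^k * qPoch (z * Xi) q (x-k)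
      = ∑ m ∈ range ((x+1)-k),
          Xi^k * qb q x k / qPoch c q k * z^k *
            ((-1:ℂ)^m * qb q (x-k) m * q^(m.choose 2) * (z*Xi)^m) := by
    intro k hk
    have hkx : k ≤ x := by simp only [mem_range] at hk; omega
    rw [qbinom q hp (z*Xi) (x-k), Finset.mul_sum, show (x+1)-k = (x-k)+1 by omega]
  rw [Finset.sum_congr rfl e1]
  have e2 : ∑ k ∈ range (x+1), ∑ m ∈ range ((x+1)-k),
        Xi^k * qb q x k / qPoch c q k * z^k *
          ((-1:ℂ)^m * qb q (x-k) m * q^(m.choose 2) * (z*Xi)^m)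
      = ∑ l ∈ range (x+1), ∑ k ∈ range (l+1),
        Xi^k * qb q x k / qPoch c q k * z^k *
          ((-1:ℂ)^(l-k) * qb q (x-k) (l-k) * q^((l-k).choose 2) * (z*Xi)^(l-k)) := by
    rw [sum_triangle (x+1) (fun l k =>
      Xi^k * qb q x k / qPoch c q k * z^k *
        ((-1:ℂ)^(l-k) * qb q (x-k) (l-k) * q^((l-k).choose 2) * (z*Xi)^(l-k)))]
    refine Finset.sum_congr rfl fun k hk => Finset.sum_congr rfl fun m hm => ?_
    rw [show k+m-k = m by omega]
  rw [e2]
  refine Finset.sum_congr rfl fun l hl => ?_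
  have hlx : l ≤ x := by simp only [mem_range] at hl; omega
  have perk : ∀ k ∈ range (l+1),
      Xi^k * qb q x k / qPoch c q k * z^k *
        ((-1:ℂ)^(l-k) * qb q (x-k) (l-k) * q^((l-k).choose 2) * (z*Xi)^(l-k))
      = (Xi^l * z^l * qb q x l) *
        ((-1:ℂ)^(l-k) * qb q l k * q^((l-k).choose 2) / qPoch c q k) := by
    intro k hk
    have hkl : k ≤ l := by simp only [mem_range] at hk; omega
    have hqb := qb_subset q hp hkl hlx
    have hz : z^k * z^(l-k) = z^l := by rw [← pow_add]; congr 1; omega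
    have hXi2 : Xi^k * Xi^(l-k) = Xi^l := by rw [← pow_add]; congr 1; omega
    have hbig : Xi^k * z^k * (z*Xi)^(l-k) * (qb q x k * qb q (x-k) (l-k))
        = Xi^l * z^l * (qb q x l * qb q l k) := by
      rw [mul_pow, hqb]
      calc Xi^k * z^k * (z^(l-k) * Xi^(l-k)) * (qb q x k * qb q (x-k) (l-k))
          = (Xi^k * Xi^(l-k)) * (z^k * z^(l-k)) * (qb q x k * qb q (x-k) (l-k)) := by ring
        _ = _ := by rw [hz, hXi2]
    linear_combination ((-1:ℂ)^(l-k) * q^((l-k).choose 2) / qPoch c q k) * hbig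
  rw [Finset.sum_congr rfl perk, ← Finset.mul_sum, Vdiv q hp hq0 c hc l]
  ring
end QK

namespace QK
variable (q : ℂ) (hp : ∀ n, qPoch q q n ≠ 0) (hq0 : q ≠ 0)
include hp hq0

lemma keystep (N x k m : ℕ) (hx : x ≤ N) (hkN : k ≤ N) (hm : m ≤ N - k)
    (c z : ℂ) (hc : ∀ n, qPoch c q n ≠ 0) :
    (qPoch ((q^N)⁻¹) q (k+m) / qPoch q q (k+m)) *
      ((qPoch ((q^(k+m))⁻¹) q k * qPoch ((q^x)⁻¹) q k /
          (qPoch c q k * qPoch ((q^N)⁻¹) q k * qPoch q q k)) * q^k) * z^(k+m)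
    = (((q^x)⁻¹)^k * qb q x k / qPoch c q k * z^k) *
      ((-1:ℂ)^m * qb q (N-k) m * q^(m.choose 2) * (z * (q^N)⁻¹)^m) := by
  have h1 := qPoch_inv q hp hq0 N (k+m)
  have h2 := qPoch_inv q hp hq0 (k+m) k
  have h3 := qPoch_inv q hp hq0 x k
  have h4 := qPoch_inv q hp hq0 N k
  have hsub : qb q N (k+m) * qb q (k+m) k = qb q N k * qb q (N-k) m := by
    have := qb_subset q hp (show k ≤ k+m by omega) (show k+m ≤ N by omega)
    rwa [show k+m-k = m by omega] at this
  have hbN : qb q N k ≠ 0 := qb_ne_zero q hp hkN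
  have hpk := hp k; have hpkm := hp (k+m); have hck := hc k
  have hqN : (q:ℂ)^N ≠ 0 := pow_ne_zero _ hq0
  have hqx : (q:ℂ)^x ≠ 0 := pow_ne_zero _ hq0
  have hqkm : (q:ℂ)^(k+m) ≠ 0 := pow_ne_zero _ hq0
  rw [h1, h2, h3, h4]
  have hsk : ((-1:ℂ))^k ≠ 0 := pow_ne_zero _ (by norm_num)
  have hqC : (q:ℂ)^(k.choose 2) ≠ 0 := pow_ne_zero _ hq0
  have e5 : ((q:ℂ)^(k+m))^k = (q^(k.choose 2) * q^(k.choose 2) * q^k) * q^(k*m) := by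
    rw [← pow_mul, ← pow_add, ← pow_add, ← pow_add]; congr 1
    have := N2.two_choose2 k; nlinarith
  have hskm : ((-1:ℂ))^(k+m) ≠ 0 := pow_ne_zero _ (by norm_num)
  have hsm : ((-1:ℂ))^m ≠ 0 := pow_ne_zero _ (by norm_num)
  have hCkm : (q:ℂ)^((k+m).choose 2) = q^(k.choose 2) * q^(m.choose 2) * q^(k*m) := by
    rw [← pow_add, ← pow_add, N2.choose2_add]
  rw [hCkm, inv_pow ((q:ℂ)^(k+m)) k, e5]
  field_simp
  have hden : ((q:ℂ)^N)^(k+m) * qPoch q q (k+m) *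
      (q^(k.choose 2) * q^(k.choose 2) * q^k * q^(k*m) * ((q:ℂ)^x)^k *
        (qPoch c q k * ((-1:ℂ)^k * q^(k.choose 2) * qb q N k * qPoch q q k) * qPoch q q k)) ≠ 0 := by
    repeat' apply mul_ne_zero
    all_goals first
      | exact pow_ne_zero _ hqN | exact pow_ne_zero _ hqx | exact pow_ne_zero _ hq0
      | exact hpkm | exact hpk | exact hck | exact hbN | exact hsk
  have hss : ((-1:ℂ))^k * (-1)^k = 1 := by
    rw [← pow_add, show k+k = 2*k by ring, pow_mul]; norm_num
  simp only [pow_add]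
  linear_combination
    ((-1:ℂ)^k * (-1)^m * (-1)^k * (1/(q:ℂ)^N)^k * (1/(q:ℂ)^N)^m * qb q x k * z^k * z^m) * hsub
    + ((-1:ℂ)^m * (1/(q:ℂ)^N)^k * (1/(q:ℂ)^N)^m * qb q x k * z^k * z^m * qb q N k * qb q (N-k) m) * hss
end QK

namespace QK

lemma qPoch_real_ne_zero (a q : ℝ) (ha0 : 0 < a) (ha1 : a < 1) (hq0 : 0 < q) (hq1 : q ≤ 1)
    (n : ℕ) : qPoch (a:ℂ) (q:ℂ) n ≠ 0 := by
  rw [qPoch, Finset.prod_ne_zero_iff]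
  intro j _
  have hpow : q^j ≤ 1 := pow_le_one₀ hq0.le hq1
  have hlt : a * q^j < 1 := by nlinarith [pow_pos hq0 j]
  intro h
  have h2 : (a:ℂ) * (q:ℂ)^j = 1 := by linear_combination -h
  have h3 : ((a * q^j : ℝ) : ℂ) = ((1:ℝ):ℂ) := by push_cast; linear_combination h2
  have h4 : a * q^j = 1 := Complex.ofReal_injective h3
  linarith

end QK


/-- **Equation (7.2)**: generating function for the affine q-Krawtchouk polynomials;
the left-hand factor `Σ_k` is the terminating series `₁φ₁(q^{-x};tq;q,tqz)`. -/
theorem generating_function_affine_qKrawtchouk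
    (q t : ℝ) (hq0 : 0 < q) (hq1 : q < 1) (ht0 : 0 < t * q) (ht1 : t * q < 1)
    (N : ℕ) (x : ℕ) (hx : x ≤ N) (z : ℂ) :
    qPoch (z * (q:ℂ) ^ (-(N:ℤ))) (q:ℂ) (N - x) *
      ∑ k ∈ Finset.range (x+1),
        (qPoch ((q:ℂ) ^ (-(x:ℤ))) (q:ℂ) k / (qPoch ((t:ℂ) * (q:ℂ)) (q:ℂ) k * qPoch (q:ℂ) (q:ℂ) k)) *
          (-1:ℂ) ^ k * (q:ℂ) ^ (k*(k-1)/2) * ((t:ℂ) * (q:ℂ) * z) ^ k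
    = ∑ l ∈ Finset.range (N+1),
        (qPoch ((q:ℂ) ^ (-(N:ℤ))) (q:ℂ) l / qPoch (q:ℂ) (q:ℂ) l) *
          qKraw (l:ℤ) ((q:ℂ) ^ (-(x:ℤ))) (t:ℂ) (N:ℤ) (q:ℂ) * z ^ l := by
  have hq0C : (q:ℂ) ≠ 0 := by
    simpa using (show ((q:ℝ):ℂ) ≠ 0 by exact_mod_cast ne_of_gt hq0)
  have hp : ∀ n, qPoch (q:ℂ) (q:ℂ) n ≠ 0 :=
    fun n => QK.qPoch_real_ne_zero q q hq0 hq1 hq0 hq1.le n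
  have hc : ∀ n, qPoch ((t:ℂ)*(q:ℂ)) (q:ℂ) n ≠ 0 := by
    intro n
    have hcast : ((t*q:ℝ):ℂ) = (t:ℂ)*(q:ℂ) := by push_cast; ring
    rw [← hcast]
    exact QK.qPoch_real_ne_zero (t*q) q ht0 ht1 hq0 hq1.le n
  simp only [zpow_neg, zpow_natCast]
  -- RHS: unfold qKraw and normalize into a double sum
  have hR : ∀ l ∈ range (N+1),
      (qPoch (((q:ℂ)^N)⁻¹) (q:ℂ) l / qPoch (q:ℂ) (q:ℂ) l) *
          qKraw (l:ℤ) (((q:ℂ)^x)⁻¹) (t:ℂ) (N:ℤ) (q:ℂ) * z^l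
      = ∑ k ∈ range (l+1),
          (qPoch (((q:ℂ)^N)⁻¹) (q:ℂ) l / qPoch (q:ℂ) (q:ℂ) l) *
            ((qPoch (((q:ℂ)^l)⁻¹) (q:ℂ) k * qPoch (((q:ℂ)^x)⁻¹) (q:ℂ) k /
              (qPoch ((t:ℂ)*(q:ℂ)) (q:ℂ) k * qPoch (((q:ℂ)^N)⁻¹) (q:ℂ) k *
                qPoch (q:ℂ) (q:ℂ) k)) * (q:ℂ)^k) * z^l := by
    intro l hl
    have hlN : l ≤ N := by simp only [mem_range] at hl; omega
    rw [qKraw, if_pos ⟨Int.natCast_nonneg l, by exact_mod_cast hlN⟩, Int.toNat_natCast]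
    simp only [zpow_neg, zpow_natCast]
    rw [Finset.mul_sum, Finset.sum_mul]
  rw [Finset.sum_congr rfl hR]
  rw [QK.sum_triangle (N+1)
    (fun l k => (qPoch (((q:ℂ)^N)⁻¹) (q:ℂ) l / qPoch (q:ℂ) (q:ℂ) l) *
      ((qPoch (((q:ℂ)^l)⁻¹) (q:ℂ) k * qPoch (((q:ℂ)^x)⁻¹) (q:ℂ) k /
        (qPoch ((t:ℂ)*(q:ℂ)) (q:ℂ) k * qPoch (((q:ℂ)^N)⁻¹) (q:ℂ) k *
          qPoch (q:ℂ) (q:ℂ) k)) * (q:ℂ)^k) * z^l)]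
  -- apply keystep and resum the inner sums
  have hInner : ∀ k ∈ range (N+1),
      (∑ m ∈ range (N+1-k),
        (qPoch (((q:ℂ)^N)⁻¹) (q:ℂ) (k+m) / qPoch (q:ℂ) (q:ℂ) (k+m)) *
          ((qPoch (((q:ℂ)^(k+m))⁻¹) (q:ℂ) k * qPoch (((q:ℂ)^x)⁻¹) (q:ℂ) k /
            (qPoch ((t:ℂ)*(q:ℂ)) (q:ℂ) k * qPoch (((q:ℂ)^N)⁻¹) (q:ℂ) k *
              qPoch (q:ℂ) (q:ℂ) k)) * (q:ℂ)^k) * z^(k+m))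
      = ((((q:ℂ)^x)⁻¹)^k * QK.qb (q:ℂ) x k / qPoch ((t:ℂ)*(q:ℂ)) (q:ℂ) k * z^k) *
          qPoch (z * ((q:ℂ)^N)⁻¹) (q:ℂ) (N-k) := by
    intro k hk
    have hkN : k ≤ N := by simp only [mem_range] at hk; omega
    have e : ∀ m ∈ range (N+1-k),
        (qPoch (((q:ℂ)^N)⁻¹) (q:ℂ) (k+m) / qPoch (q:ℂ) (q:ℂ) (k+m)) *
          ((qPoch (((q:ℂ)^(k+m))⁻¹) (q:ℂ) k * qPoch (((q:ℂ)^x)⁻¹) (q:ℂ) k /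
            (qPoch ((t:ℂ)*(q:ℂ)) (q:ℂ) k * qPoch (((q:ℂ)^N)⁻¹) (q:ℂ) k *
              qPoch (q:ℂ) (q:ℂ) k)) * (q:ℂ)^k) * z^(k+m)
        = ((((q:ℂ)^x)⁻¹)^k * QK.qb (q:ℂ) x k / qPoch ((t:ℂ)*(q:ℂ)) (q:ℂ) k * z^k) *
          ((-1:ℂ)^m * QK.qb (q:ℂ) (N-k) m * (q:ℂ)^(m.choose 2) * (z * ((q:ℂ)^N)⁻¹)^m) := by
      intro m hm
      have hmk : m ≤ N - k := by simp only [mem_range] at hm; omega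
      exact QK.keystep (q:ℂ) hp hq0C N x k m hx hkN hmk ((t:ℂ)*(q:ℂ)) z hc
    rw [Finset.sum_congr rfl e, ← Finset.mul_sum,
        show N+1-k = (N-k)+1 by omega,
        ← QK.qbinom (q:ℂ) hp (z * ((q:ℂ)^N)⁻¹) (N-k)]
  rw [Finset.sum_congr rfl hInner]
  -- truncate the k-sum to range (x+1)
  have htrunc : ∑ k ∈ range (N+1),
      ((((q:ℂ)^x)⁻¹)^k * QK.qb (q:ℂ) x k / qPoch ((t:ℂ)*(q:ℂ)) (q:ℂ) k * z^k) *
        qPoch (z * ((q:ℂ)^N)⁻¹) (q:ℂ) (N-k)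
      = ∑ k ∈ range (x+1),
      ((((q:ℂ)^x)⁻¹)^k * QK.qb (q:ℂ) x k / qPoch ((t:ℂ)*(q:ℂ)) (q:ℂ) k * z^k) *
        qPoch (z * ((q:ℂ)^N)⁻¹) (q:ℂ) (N-k) := by
    refine (Finset.sum_subset (Finset.range_subset_range.mpr (by omega)) ?_).symm
    intro k hk1 hk2
    simp only [mem_range] at hk1 hk2
    rw [QK.qb_eq_zero (q:ℂ) (show x < k by omega)]
    ring
  rw [htrunc]
  -- split the Pochhammer and pull out the common factor
  have hsplit : ∀ k ∈ range (x+1),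
      ((((q:ℂ)^x)⁻¹)^k * QK.qb (q:ℂ) x k / qPoch ((t:ℂ)*(q:ℂ)) (q:ℂ) k * z^k) *
        qPoch (z * ((q:ℂ)^N)⁻¹) (q:ℂ) (N-k)
      = qPoch (z * ((q:ℂ)^N)⁻¹) (q:ℂ) (N-x) *
        (((((q:ℂ)^x)⁻¹)^k * QK.qb (q:ℂ) x k / qPoch ((t:ℂ)*(q:ℂ)) (q:ℂ) k * z^k) *
          qPoch (z * ((q:ℂ)^x)⁻¹) (q:ℂ) (x-k)) := by
    intro k hk
    have hkx : k ≤ x := by simp only [mem_range] at hk; omega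
    have harg : z * ((q:ℂ)^N)⁻¹ * (q:ℂ)^(N-x) = z * ((q:ℂ)^x)⁻¹ := by
      have hNx : (q:ℂ)^x * (q:ℂ)^(N-x) = (q:ℂ)^N := by
        rw [← pow_add]; congr 1; omega
      field_simp
      linear_combination z * hNx
    rw [show N-k = (N-x)+(x-k) by omega, QK.qPoch_add, harg]
    ring
  rw [Finset.sum_congr rfl hsplit, ← Finset.mul_sum]
  rw [QK.star (q:ℂ) hp hq0C ((t:ℂ)*(q:ℂ)) hc x z]
  -- LHS: normalize each term of the sum
  have hL : ∀ k ∈ range (x+1),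
      (qPoch (((q:ℂ)^x)⁻¹) (q:ℂ) k / (qPoch ((t:ℂ)*(q:ℂ)) (q:ℂ) k * qPoch (q:ℂ) (q:ℂ) k)) *
        (-1:ℂ)^k * (q:ℂ)^(k*(k-1)/2) * ((t:ℂ)*(q:ℂ)*z)^k
      = (q:ℂ)^(k*k-k) * (((q:ℂ)^x)⁻¹)^k * QK.qb (q:ℂ) x k * ((t:ℂ)*(q:ℂ))^k * z^k /
          qPoch ((t:ℂ)*(q:ℂ)) (q:ℂ) k := by
    intro k hk
    have hck := hc k; have hpk := hp k
    rw [QK.qPoch_inv (q:ℂ) hp hq0C x k,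
        show k*(k-1)/2 = k.choose 2 from (Nat.choose_two_right k).symm,
        mul_pow ((t:ℂ)*(q:ℂ)) z k]
    have hss : ((-1:ℂ))^k * (-1)^k = 1 := by
      rw [← pow_add, show k+k = 2*k by ring, pow_mul]; norm_num
    have haa : (q:ℂ)^(k.choose 2) * (q:ℂ)^(k.choose 2) = (q:ℂ)^(k*k-k) := by
      rw [← pow_add]; congr 1
      have := N2.two_choose2 k; omega
    rw [div_mul_eq_mul_div, div_mul_eq_mul_div, div_mul_eq_mul_div,
        div_eq_div_iff (mul_ne_zero hck hpk) hck]
    linear_combination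
      ((((q:ℂ)^x)⁻¹)^k * QK.qb (q:ℂ) x k * qPoch (q:ℂ) (q:ℂ) k * (((t:ℂ)*(q:ℂ))^k * z^k) *
        qPoch ((t:ℂ)*(q:ℂ)) (q:ℂ) k * ((q:ℂ)^(k.choose 2) * (q:ℂ)^(k.choose 2))) * hss
      + ((((q:ℂ)^x)⁻¹)^k * QK.qb (q:ℂ) x k * qPoch (q:ℂ) (q:ℂ) k * (((t:ℂ)*(q:ℂ))^k * z^k) *
        qPoch ((t:ℂ)*(q:ℂ)) (q:ℂ) k) * haa
  rw [Finset.sum_congr rfl hL]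

end
end

section
/- Limit of affine q-Krawtchouk polynomials to Wall polynomials (equation (4.8)). Let 0 < q < 1, let t be real with 0 < tq < 1, and let l ∈ ℤ₊. Then for every x ∈ ℂ: lim_{N → ∞} K̂_l(x q^{-N}; t, N; q) = w_l(x; t; q). -/
open Finset

noncomputable section

/-- Principal complex square root. -/
def csqrt (z : ℂ) : ℂ := z ^ (1/2 : ℂ)

/-- orthonormal affine q-Krawtchouk polynomial `K̂_l(x;t,N;q)`, zero for `l<0` or `l>N`. -/
def qKrawHat (l : ℤ) (x t : ℂ) (N : ℤ) (q : ℂ) : ℂ :=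
  if 0 ≤ l ∧ l ≤ N then
    (-1) ^ l * (t * q) ^ (-(l:ℂ)/2) *
      csqrt (qPochDec q N l.toNat * qPoch (t * q) q l.toNat / qPoch q q l.toNat) *
      qKraw l x t N q
  else 0

/-- orthonormal Wall polynomial `w_l(x;t;q)`, zero for `l < 0`. -/
def wallHat (l : ℤ) (x t : ℂ) (q : ℂ) : ℂ :=
  if 0 ≤ l then
    (-1) ^ l * (t * q) ^ (-(l:ℂ)/2) *
      csqrt (qPoch (t * q) q l.toNat / qPoch q q l.toNat) *
      ∑ k ∈ Finset.range (l.toNat + 1),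
        (qPoch (q ^ (-l)) q k / (qPoch (t * q) q k * qPoch q q k)) * (q * x) ^ k
  else 0

/-- **Equation (4.8)**: the limit transition of affine q-Krawtchouk polynomials to
Wall polynomials, `lim_{N→∞} K̂_l(x q^{-N};t,N;q) = w_l(x;t;q)`. -/
theorem limit_affine_qKrawtchouk_to_Wall
    (q t : ℝ) (hq0 : 0 < q) (hq1 : q < 1) (ht0 : 0 < t * q) (ht1 : t * q < 1)
    (l : ℕ) (x : ℂ) :
    Filter.Tendsto
      (fun N : ℕ => qKrawHat (l:ℤ) (x * (q:ℂ) ^ (-(N:ℤ))) (t:ℂ) (N:ℤ) (q:ℂ))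
      Filter.atTop (nhds (wallHat (l:ℤ) x (t:ℂ) (q:ℂ))) := by
  have hqc0 : (q:ℂ) ≠ 0 := by exact_mod_cast hq0.ne'
  have hqn : ‖(q:ℂ)‖ < 1 := by
    rw [Complex.norm_real, Real.norm_eq_abs, abs_of_pos hq0]; exact hq1
  -- q^(N-j) → 0
  have hA : ∀ j : ℤ, Filter.Tendsto (fun N : ℕ => (q:ℂ) ^ ((N:ℤ) - j))
      Filter.atTop (nhds 0) := by
    intro j
    have h1 : Filter.Tendsto (fun N : ℕ => (q:ℂ) ^ N) Filter.atTop (nhds 0) :=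
      tendsto_pow_atTop_nhds_zero_of_norm_lt_one hqn
    have h2 := h1.div_const ((q:ℂ) ^ j)
    rw [zero_div] at h2
    refine h2.congr fun N => ?_
    rw [zpow_sub₀ hqc0, zpow_natCast]
  -- qPochDec → 1
  have hB : Filter.Tendsto (fun N : ℕ => qPochDec (q:ℂ) (N:ℤ) l)
      Filter.atTop (nhds 1) := by
    have := tendsto_finset_prod (Finset.range l)
      (f := fun (k : ℕ) (N : ℕ) => (1 : ℂ) - (q:ℂ) ^ ((N:ℤ) - (k:ℤ)))
      (x := Filter.atTop) (a := fun _ => (1:ℂ))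
      (fun k _ => by simpa using (tendsto_const_nhds.sub (hA (k:ℤ))))
    simpa [qPochDec] using this
  -- limit point is a positive real
  have hre : 0 < (qPoch ((t:ℂ) * (q:ℂ)) (q:ℂ) l / qPoch (q:ℂ) (q:ℂ) l).re := by
    have hcast : ∀ (a : ℝ), qPoch ((a:ℂ)) (q:ℂ) l
        = ((∏ k ∈ Finset.range l, (1 - a * q ^ k) : ℝ) : ℂ) := by
      intro a; rw [qPoch]; push_cast; ring_nf
    have hpos : ∀ (a : ℝ), 0 < a → a < 1 →
        (0:ℝ) < ∏ k ∈ Finset.range l, (1 - a * q ^ k) := by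
      intro a ha0 ha1
      refine Finset.prod_pos fun k _ => ?_
      have hk : q ^ k ≤ 1 := pow_le_one₀ hq0.le hq1.le
      nlinarith [pow_pos hq0 k]
    have h1 := hpos (t*q) ht0 ht1
    have h2 := hpos q hq0 hq1
    have e1 : ((t:ℂ) * (q:ℂ)) = ((t*q : ℝ) : ℂ) := by push_cast; ring
    rw [e1, hcast (t*q), hcast q, ← Complex.ofReal_div, Complex.ofReal_re]
    positivity
  -- csqrt part
  have hC : Filter.Tendsto
      (fun N : ℕ => csqrt (qPochDec (q:ℂ) (N:ℤ) l * qPoch ((t:ℂ)*(q:ℂ)) (q:ℂ) l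
        / qPoch (q:ℂ) (q:ℂ) l))
      Filter.atTop (nhds (csqrt (qPoch ((t:ℂ)*(q:ℂ)) (q:ℂ) l / qPoch (q:ℂ) (q:ℂ) l))) := by
    have hin : Filter.Tendsto
        (fun N : ℕ => qPochDec (q:ℂ) (N:ℤ) l * qPoch ((t:ℂ)*(q:ℂ)) (q:ℂ) l
          / qPoch (q:ℂ) (q:ℂ) l)
        Filter.atTop (nhds (qPoch ((t:ℂ)*(q:ℂ)) (q:ℂ) l / qPoch (q:ℂ) (q:ℂ) l)) := by
      have := (hB.mul_const (qPoch ((t:ℂ)*(q:ℂ)) (q:ℂ) l)).div_const (qPoch (q:ℂ) (q:ℂ) l)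
      simpa using this
    have hcont : ContinuousAt csqrt (qPoch ((t:ℂ)*(q:ℂ)) (q:ℂ) l / qPoch (q:ℂ) (q:ℂ) l) := by
      unfold csqrt
      exact continuousAt_cpow_const (Complex.mem_slitPlane_iff.mpr (Or.inl hre))
    exact hcont.tendsto.comp hin
  -- ratio for each k
  have hR : ∀ k : ℕ, Filter.Tendsto
      (fun N : ℕ => qPoch (x * (q:ℂ) ^ (-(N:ℤ))) (q:ℂ) k / qPoch ((q:ℂ) ^ (-(N:ℤ))) (q:ℂ) k)
      Filter.atTop (nhds (x ^ k)) := by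
    intro k
    have key : ∀ N : ℕ,
        qPoch (x * (q:ℂ) ^ (-(N:ℤ))) (q:ℂ) k / qPoch ((q:ℂ) ^ (-(N:ℤ))) (q:ℂ) k
        = ∏ j ∈ Finset.range k,
            (((q:ℂ) ^ ((N:ℤ) - (j:ℤ)) - x) / ((q:ℂ) ^ ((N:ℤ) - (j:ℤ)) - 1)) := by
      intro N
      rw [qPoch, qPoch, ← Finset.prod_div_distrib]
      refine Finset.prod_congr rfl fun j _ => ?_
      have hz : ((q:ℂ) ^ ((j:ℤ) - (N:ℤ))) ≠ 0 := zpow_ne_zero _ hqc0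
      have hjN : (q:ℂ) ^ (j:ℕ) * (q:ℂ) ^ (-(N:ℤ)) = (q:ℂ) ^ ((j:ℤ) - (N:ℤ)) := by
        rw [← zpow_natCast (q:ℂ) j, ← zpow_add₀ hqc0, ← sub_eq_add_neg]
      have hNj : (q:ℂ) ^ ((j:ℤ) - (N:ℤ)) * (q:ℂ) ^ ((N:ℤ) - (j:ℤ)) = 1 := by
        rw [← zpow_add₀ hqc0]
        norm_num
      have e1 : (1 : ℂ) - x * (q:ℂ) ^ (-(N:ℤ)) * (q:ℂ) ^ j
          = (q:ℂ) ^ ((j:ℤ) - (N:ℤ)) * ((q:ℂ) ^ ((N:ℤ) - (j:ℤ)) - x) := by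
        rw [mul_sub, hNj, ← hjN]; ring
      have e2 : (1 : ℂ) - (q:ℂ) ^ (-(N:ℤ)) * (q:ℂ) ^ j
          = (q:ℂ) ^ ((j:ℤ) - (N:ℤ)) * ((q:ℂ) ^ ((N:ℤ) - (j:ℤ)) - 1) := by
        rw [mul_sub, hNj, ← hjN]; ring
      rw [e1, e2, mul_div_mul_left _ _ hz]
    have hfac : ∀ j : ℕ, Filter.Tendsto
        (fun N : ℕ => ((q:ℂ) ^ ((N:ℤ) - (j:ℤ)) - x) / ((q:ℂ) ^ ((N:ℤ) - (j:ℤ)) - 1))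
        Filter.atTop (nhds x) := by
      intro j
      have h1 := (hA (j:ℤ)).sub_const x
      have h2 := (hA (j:ℤ)).sub_const 1
      have h3 := h1.div h2 (by norm_num)
      simpa [Pi.div_def] using h3
    have := tendsto_finset_prod (Finset.range k)
      (f := fun (j : ℕ) (N : ℕ) =>
        ((q:ℂ) ^ ((N:ℤ) - (j:ℤ)) - x) / ((q:ℂ) ^ ((N:ℤ) - (j:ℤ)) - 1))
      (x := Filter.atTop) (a := fun _ => x) (fun j _ => hfac j)
    rw [Finset.prod_const, Finset.card_range] at this
    exact Filter.Tendsto.congr (fun N => (key N).symm) this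
  -- each term of the sum
  have hterm : ∀ k : ℕ, Filter.Tendsto
      (fun N : ℕ =>
        (qPoch ((q:ℂ) ^ (-(l:ℤ))) (q:ℂ) k * qPoch (x * (q:ℂ) ^ (-(N:ℤ))) (q:ℂ) k
          / (qPoch ((t:ℂ)*(q:ℂ)) (q:ℂ) k * qPoch ((q:ℂ) ^ (-(N:ℤ))) (q:ℂ) k
             * qPoch (q:ℂ) (q:ℂ) k)) * (q:ℂ) ^ k)
      Filter.atTop
      (nhds ((qPoch ((q:ℂ) ^ (-(l:ℤ))) (q:ℂ) k
          / (qPoch ((t:ℂ)*(q:ℂ)) (q:ℂ) k * qPoch (q:ℂ) (q:ℂ) k)) * ((q:ℂ) * x) ^ k)) := by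
    intro k
    set A := qPoch ((q:ℂ) ^ (-(l:ℤ))) (q:ℂ) k
    set B := qPoch ((t:ℂ)*(q:ℂ)) (q:ℂ) k
    set C := qPoch (q:ℂ) (q:ℂ) k
    have hrw : ∀ N : ℕ,
        (A * qPoch (x * (q:ℂ) ^ (-(N:ℤ))) (q:ℂ) k
          / (B * qPoch ((q:ℂ) ^ (-(N:ℤ))) (q:ℂ) k * C)) * (q:ℂ) ^ k
        = (A / (B * C) * (q:ℂ) ^ k)
          * (qPoch (x * (q:ℂ) ^ (-(N:ℤ))) (q:ℂ) k / qPoch ((q:ℂ) ^ (-(N:ℤ))) (q:ℂ) k) := by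
      intro N
      simp only [div_eq_mul_inv, mul_inv]
      ring
    have h := (hR k).const_mul (A / (B * C) * (q:ℂ) ^ k)
    refine Filter.Tendsto.congr (fun N => (hrw N).symm) (h.congr' ?_ |>.mono_right ?_)
    · exact Filter.Eventually.of_forall fun N => rfl
    · have : A / (B * C) * (q:ℂ) ^ k * x ^ k = A / (B * C) * ((q:ℂ) * x) ^ k := by
        rw [mul_pow]; ring
      rw [this]
  -- the sum
  have hS : Filter.Tendsto
      (fun N : ℕ => ∑ k ∈ Finset.range (l + 1),
        (qPoch ((q:ℂ) ^ (-(l:ℤ))) (q:ℂ) k * qPoch (x * (q:ℂ) ^ (-(N:ℤ))) (q:ℂ) k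
          / (qPoch ((t:ℂ)*(q:ℂ)) (q:ℂ) k * qPoch ((q:ℂ) ^ (-(N:ℤ))) (q:ℂ) k
             * qPoch (q:ℂ) (q:ℂ) k)) * (q:ℂ) ^ k)
      Filter.atTop
      (nhds (∑ k ∈ Finset.range (l + 1),
        (qPoch ((q:ℂ) ^ (-(l:ℤ))) (q:ℂ) k
          / (qPoch ((t:ℂ)*(q:ℂ)) (q:ℂ) k * qPoch (q:ℂ) (q:ℂ) k)) * ((q:ℂ) * x) ^ k)) :=
    tendsto_finset_sum _ fun k _ => hterm k
  -- assemble
  have hfull := (hC.const_mul ((-1) ^ (l:ℤ) * ((t:ℂ) * (q:ℂ)) ^ (-((l:ℤ):ℂ)/2))).mul hS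
  have hwall : wallHat (l:ℤ) x (t:ℂ) (q:ℂ)
      = (-1) ^ (l:ℤ) * ((t:ℂ) * (q:ℂ)) ^ (-((l:ℤ):ℂ)/2) * csqrt (qPoch ((t:ℂ)*(q:ℂ)) (q:ℂ) l / qPoch (q:ℂ) (q:ℂ) l)
        * ∑ k ∈ Finset.range (l + 1),
          (qPoch ((q:ℂ) ^ (-(l:ℤ))) (q:ℂ) k
            / (qPoch ((t:ℂ)*(q:ℂ)) (q:ℂ) k * qPoch (q:ℂ) (q:ℂ) k)) * ((q:ℂ) * x) ^ k := by
    rw [wallHat, if_pos (by exact_mod_cast Nat.zero_le l)]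
    simp only [Int.toNat_natCast]
  rw [hwall]
  refine hfull.congr' ?_
  filter_upwards [Filter.eventually_ge_atTop l] with N hN
  have hcond : (0:ℤ) ≤ (l:ℤ) ∧ (l:ℤ) ≤ (N:ℤ) :=
    ⟨by exact_mod_cast Nat.zero_le l, by exact_mod_cast hN⟩
  rw [qKrawHat, if_pos hcond, qKraw, if_pos hcond]
  simp only [Int.toNat_natCast]

end
end
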